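/- arXiv:1411.1701 — 5 statements merged into one kernel-verified Lean document; each statement's English description precedes it below -/
import Mathlib

section
/- Let P(u,v) be a non-degenerate 2×n transportation polytope and let k be the number of critical edges of P(u,v). Then the graph diameter of P(u,v) is at most min{n, n + 1 − k}. -/
open scoped Classical

/-- The m×n transportation polytope with margins u, v. -/
def TP (m n : ℕ) (u : Fin m → ℝ) (v : Fin n → ℝ) : Set (Matrix (Fin m) (Fin n) ℝ) :=
  {y | (∀ i j, 0 ≤ y i j) ∧ (∀ i, ∑ j, y i j = u i) ∧ (∀ j, ∑ i, y i j = v j)}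

/-- The support of a matrix: the set of positions with positive entry. -/
noncomputable def suppF (m n : ℕ) (y : Matrix (Fin m) (Fin n) ℝ) : Finset (Fin m × Fin n) :=
  Finset.univ.filter (fun p => 0 < y p.1 p.2)

/-- Non-degeneracy: every vertex has exactly m + n − 1 positive entries. -/
def NonDeg (m n : ℕ) (u : Fin m → ℝ) (v : Fin n → ℝ) : Prop :=
  ∀ y ∈ Set.extremePoints ℝ (TP m n u v), (suppF m n y).card = m + n - 1

/-- The number of critical edges: pairs (i,j) with y i j > 0 for every y in P. -/
noncomputable def criticalCount (m n : ℕ) (u : Fin m → ℝ) (v : Fin n → ℝ) : ℕ :=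
  (Finset.univ.filter
    (fun p : Fin m × Fin n => ∀ y ∈ TP m n u v, 0 < y p.1 p.2)).card

/-- Two distinct vertices are adjacent if the segment between them is extreme in P. -/
def AdjVert (m n : ℕ) (u : Fin m → ℝ) (v : Fin n → ℝ)
    (y z : Matrix (Fin m) (Fin n) ℝ) : Prop :=
  y ≠ z ∧ y ∈ Set.extremePoints ℝ (TP m n u v) ∧ z ∈ Set.extremePoints ℝ (TP m n u v) ∧
    IsExtreme ℝ (TP m n u v) (segment ℝ y z)


/-!
Under non-degeneracy a vertex of `TP 2 n u v` has exactly one column `s` with two positive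
entries, and an edge of the polytope is a pivot: it adds one cell `(i, c)` to the support and
removes the first cell of the cycle through `(i, c)` and column `s` that empties.

To walk from a vertex `O` to a vertex `F`, measure the distance of `y` to `F` by the number
`supportGap F y` of positive entries of `y` at which `F` vanishes. A greedy choice of pivots lowers
it at every step, except possibly once when `y` and `F` split at the same column `f`; that extra
step passes through a vertex with a zero in column `f`, so one more cell of `supp O ∩ supp F` is
not critical. Critical cells lie in every support and
`supportGap F O + #(supp O ∩ supp F) = n + 1`, so the length `L` of the walk and the number `k` of
critical cells satisfy `L + k ≤ n + 1`, and also `L ≤ n`.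
-/

open Finset

namespace TransportationPolytope

section General

variable {m n : ℕ} {u : Fin m → ℝ} {v : Fin n → ℝ} {y z w : Matrix (Fin m) (Fin n) ℝ}

lemma mem_suppF {p : Fin m × Fin n} : p ∈ suppF m n y ↔ 0 < y p.1 p.2 := by
  simp [suppF]

lemma convex_TP : Convex ℝ (TP m n u v) := by
  rintro y ⟨hy0, hyr, hyc⟩ z ⟨hz0, hzr, hzc⟩ a b ha hb hab
  refine ⟨fun i j => ?_, fun i => ?_, fun j => ?_⟩
  · simp only [Matrix.add_apply, Matrix.smul_apply, smul_eq_mul]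
    have := hy0 i j; have := hz0 i j
    positivity
  · simp only [Matrix.add_apply, Matrix.smul_apply, smul_eq_mul, sum_add_distrib, ← mul_sum,
      hyr, hzr]
    rw [← add_mul, hab, one_mul]
  · simp only [Matrix.add_apply, Matrix.smul_apply, smul_eq_mul, sum_add_distrib, ← mul_sum,
      hyc, hzc]
    rw [← add_mul, hab, one_mul]

variable (u v) in
def zeroFace (Z : Set (Fin m × Fin n)) : Set (Matrix (Fin m) (Fin n) ℝ) :=
  {w ∈ TP m n u v | ∀ p ∈ Z, w p.1 p.2 = 0}

lemma isExtreme_zeroFace (Z : Set (Fin m × Fin n)) :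
    IsExtreme ℝ (TP m n u v) (zeroFace u v Z) := by
  refine ⟨fun w hw => hw.1, ?_⟩
  rintro y hy z hz w ⟨-, hwZ⟩ ⟨a, b, ha, hb, -, hw⟩
  refine ⟨hy, fun p hp => ?_⟩
  have hsum : a * y p.1 p.2 + b * z p.1 p.2 = 0 := by
    rw [← hwZ p hp, ← hw]; simp
  have := hy.1 p.1 p.2; have := hz.1 p.1 p.2
  nlinarith [mul_nonneg ha.le this]

lemma convex_zeroFace (Z : Set (Fin m × Fin n)) : Convex ℝ (zeroFace u v Z) := by
  rintro y ⟨hy, hyZ⟩ z ⟨hz, hzZ⟩ a b ha hb hab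
  refine ⟨convex_TP hy hz ha hb hab, fun p hp => ?_⟩
  simp [hyZ p hp, hzZ p hp]

lemma eq_of_eqOn_ne_column (hy : y ∈ TP m n u v) (hz : z ∈ TP m n u v) (s : Fin n)
    (h : ∀ i j, j ≠ s → y i j = z i j) : y = z := by
  ext i j
  rcases eq_or_ne j s with rfl | hj
  · have hrow : ∑ j, (y i j - z i j) = 0 := by rw [sum_sub_distrib, hy.2.1, hz.2.1, sub_self]
    rw [Fintype.sum_eq_single j fun k hk => sub_eq_zero.2 (h i k hk)] at hrow
    linarith
  · exact h i j hj

lemma add_eq_add_of_eqOn {c s : Fin n} (hy : y ∈ TP m n u v) (hz : z ∈ TP m n u v) (hcs : c ≠ s)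
    (i : Fin m) (h : ∀ j, j ≠ c → j ≠ s → y i j = z i j) : y i c + y i s = z i c + z i s := by
  have hrow : ∑ j, (y i j - z i j) = 0 := by rw [sum_sub_distrib, hy.2.1, hz.2.1, sub_self]
  rw [Fintype.sum_eq_add c s hcs fun j hj => sub_eq_zero.2 (h j hj.1 hj.2)] at hrow
  linarith

lemma sub_le_sub_of_le_of_ne {F : Matrix (Fin m) (Fin n) ℝ} {i : Fin m} {c f : Fin n}
    (hy : y ∈ TP m n u v) (hF : F ∈ TP m n u v) (hcf : c ≠ f) (h : ∀ j, j ≠ f → y i j ≤ F i j) :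
    F i c - y i c ≤ y i f - F i f := by
  have hrow : ∑ j, (F i j - y i j) = 0 := by rw [sum_sub_distrib, hy.2.1, hF.2.1, sub_self]
  have hnonneg : ∀ j ∈ univ.erase f, 0 ≤ F i j - y i j := fun j hj =>
    sub_nonneg.2 (h j (ne_of_mem_erase hj))
  have := single_le_sum hnonneg (mem_erase.2 ⟨hcf, mem_univ c⟩)
  rw [← add_sum_erase _ _ (mem_univ f)] at hrow
  linarith

lemma criticalCount_le_card {T : Finset (Fin m × Fin n)}
    (hT : ∀ p, (∀ y ∈ TP m n u v, 0 < y p.1 p.2) → p ∈ T) : criticalCount m n u v ≤ T.card :=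
  card_le_card fun p hp => hT p (mem_filter.1 hp).2

variable (m n u v) in
def graph : SimpleGraph (Matrix (Fin m) (Fin n) ℝ) where
  Adj := AdjVert m n u v
  symm := ⟨fun y z h => ⟨h.1.symm, h.2.2.1, h.2.1, segment_symm ℝ z y ▸ h.2.2.2⟩⟩
  loopless := ⟨fun _ h => h.1 rfl⟩

end General

section TwoRows

variable {n : ℕ} {u : Fin 2 → ℝ} {v : Fin n → ℝ} {y z w F : Matrix (Fin 2) (Fin n) ℝ}
  {i i' k : Fin 2} {c s f j : Fin n}

lemma eq_or_eq_of_ne (h : i ≠ i') (k : Fin 2) : k = i ∨ k = i' := by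
  revert i i' k; decide

lemma add_eq_of_ne (hy : y ∈ TP 2 n u v) (h : i ≠ i') (j : Fin n) : y i j + y i' j = v j := by
  rw [← hy.2.2 j, Fin.sum_univ_two]
  obtain ⟨rfl, rfl⟩ | ⟨rfl, rfl⟩ : i = 0 ∧ i' = 1 ∨ i = 1 ∧ i' = 0 := by revert i i'; decide
  · rfl
  · exact add_comm _ _

lemma apply_le (hy : y ∈ TP 2 n u v) (i : Fin 2) (j : Fin n) : y i j ≤ v j := by
  obtain ⟨i', hi'⟩ := exists_ne i
  linarith [add_eq_of_ne hy hi'.symm j, hy.1 i' j]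

lemma apply_eq_of_apply_eq (hy : y ∈ TP 2 n u v) (hz : z ∈ TP 2 n u v) (h : y i j = z i j)
    (k : Fin 2) : y k j = z k j := by
  rcases eq_or_ne k i with rfl | hk
  · exact h
  · linarith [add_eq_of_ne hy hk j, add_eq_of_ne hz hk j]

lemma eq_of_zero_imp_zero (hy : y ∈ TP 2 n u v) (hpure : ∀ j, j ≠ s → ∃ i, y i j = 0)
    (hw : w ∈ TP 2 n u v) (h : ∀ i j, j ≠ s → y i j = 0 → w i j = 0) : w = y := by
  refine eq_of_eqOn_ne_column hw hy s fun k j hj => ?_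
  obtain ⟨i, hi⟩ := hpure j hj
  exact apply_eq_of_apply_eq hw hy (by rw [hi, h i j hj hi]) k

lemma mem_extremePoints_of_zero (hy : y ∈ TP 2 n u v) (hpure : ∀ j, j ≠ s → ∃ i, y i j = 0) :
    y ∈ (TP 2 n u v).extremePoints ℝ := by
  rw [← isExtreme_singleton]
  convert isExtreme_zeroFace (u := u) (v := v) {p | p.2 ≠ s ∧ y p.1 p.2 = 0}
  ext w
  refine ⟨?_, fun hw => eq_of_zero_imp_zero hy hpure hw.1 fun i j hj hij => hw.2 (i, j) ⟨hj, hij⟩⟩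
  rintro rfl
  exact ⟨hy, fun p hp => hp.2⟩

variable (u v) in
/-- Under non-degeneracy these are exactly the vertices: their supports are the spanning trees of
`K_{2,n}`, and `s` is the only column of degree two. -/
def IsSplitAt (y : Matrix (Fin 2) (Fin n) ℝ) (s : Fin n) : Prop :=
  y ∈ TP 2 n u v ∧ (∀ i, 0 < y i s) ∧ ∀ j, j ≠ s → ∃ i, y i j = 0

lemma IsSplitAt.mem_extremePoints (hy : IsSplitAt u v y s) :
    y ∈ (TP 2 n u v).extremePoints ℝ :=
  mem_extremePoints_of_zero hy.1 hy.2.2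

lemma IsSplitAt.apply_eq_zero (hy : IsSplitAt u v y s) (hj : j ≠ s) (hpos : 0 < y i j)
    (hi : i' ≠ i) : y i' j = 0 := by
  obtain ⟨k, hk⟩ := hy.2.2 j hj
  rcases eq_or_eq_of_ne hi k with rfl | rfl
  · exact hk
  · exact absurd hk hpos.ne'

lemma IsSplitAt.apply_eq (hy : IsSplitAt u v y s) (hj : j ≠ s) (hpos : 0 < y i j) :
    y i j = v j := by
  obtain ⟨i', hi'⟩ := exists_ne i
  linarith [add_eq_of_ne hy.1 hi'.symm j, hy.apply_eq_zero hj hpos hi']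

lemma card_suppF (hv : ∀ j, 0 < v j) (hy : y ∈ TP 2 n u v) :
    (suppF 2 n y).card = n + #{j | ∀ i, 0 < y i j} := by
  have hcol : ∀ j, ((if 0 < y 0 j then 1 else 0) + if 0 < y 1 j then 1 else 0)
      = 1 + if ∀ i, 0 < y i j then 1 else 0 := by
    intro j
    have := add_eq_of_ne hy (show (0 : Fin 2) ≠ 1 by decide) j
    have := hy.1 0 j; have := hy.1 1 j; have := hv j
    simp only [Fin.forall_fin_two]
    split_ifs <;> first | rfl | (exfalso; tauto) | (exfalso; linarith)
  rw [suppF, card_filter, Fintype.sum_prod_type, Fin.sum_univ_two, ← sum_add_distrib]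
  simp only [hcol, sum_add_distrib, sum_const, card_univ, Fintype.card_fin, smul_eq_mul, mul_one,
    ← card_filter]

lemma exists_isSplitAt (hv : ∀ j, 0 < v j) (hnd : NonDeg 2 n u v)
    (hy : y ∈ (TP 2 n u v).extremePoints ℝ) : ∃ s, IsSplitAt u v y s := by
  have hcard := hnd y hy
  rw [card_suppF hv hy.1] at hcard
  obtain ⟨s, hs⟩ := card_eq_one.1 (show #{j | ∀ i, 0 < y i j} = 1 by omega)
  refine ⟨s, hy.1, (mem_filter.1 (hs ▸ mem_singleton_self s)).2, fun j hj => ?_⟩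
  have : j ∉ ({j | ∀ i, 0 < y i j} : Finset (Fin n)) := by rw [hs]; simpa using hj
  simp only [mem_filter, mem_univ, true_and, not_forall, not_lt] at this
  obtain ⟨i, hi⟩ := this
  exact ⟨i, le_antisymm hi (hy.1.1 i j)⟩

lemma not_forall_exists_apply_eq_zero (hn : 0 < n) (hv : ∀ j, 0 < v j) (hnd : NonDeg 2 n u v)
    (hy : y ∈ TP 2 n u v) : ¬ ∀ j, ∃ i, y i j = 0 := by
  intro hpure
  have hcard := hnd y (mem_extremePoints_of_zero (s := ⟨0, hn⟩) hy fun j _ => hpure j)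
  have hempty : #{j | ∀ i, 0 < y i j} = 0 := by
    refine card_eq_zero.2 (filter_eq_empty_iff.2 fun j _ hj => ?_)
    obtain ⟨i, hi⟩ := hpure j
    exact (hj i).ne' hi
  rw [card_suppF hv hy, hempty] at hcard
  omega

lemma mem_segment_of_eqOn (hy : y ∈ TP 2 n u v) (hz : z ∈ TP 2 n u v) (hw : w ∈ TP 2 n u v)
    (hcs : c ≠ s) (hzy : ∀ k j, j ≠ c → j ≠ s → z k j = y k j)
    (hwy : ∀ k j, j ≠ c → j ≠ s → w k j = y k j) (hseg : w i c ∈ segment ℝ (y i c) (z i c)) :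
    w ∈ segment ℝ y z := by
  obtain ⟨a, b, ha, hb, hab, hwc⟩ := hseg
  refine ⟨a, b, ha, hb, hab, eq_of_eqOn_ne_column (convex_TP hy hz ha hb hab) hw s ?_⟩
  intro k j hj
  rcases eq_or_ne j c with rfl | hjc
  · refine apply_eq_of_apply_eq (i := i) (convex_TP hy hz ha hb hab) hw ?_ k
    simpa using hwc
  · simp only [Matrix.add_apply, Matrix.smul_apply, smul_eq_mul, hzy k j hjc hj, hwy k j hjc hj]
    rw [← add_mul, hab, one_mul]

variable (n) in
/-- The elementary cycle `(i, c) → (i, s) → (i', s) → (i', c)` of the bipartite graph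
`K_{2,n}`, with signs: adding a multiple of it preserves all row and column sums. -/
def cycle (i : Fin 2) (c s : Fin n) : Matrix (Fin 2) (Fin n) ℝ :=
  Matrix.of fun k j =>
    (if k = i then 1 else -1) * ((if j = c then 1 else 0) - if j = s then 1 else 0)

lemma cycle_apply_of_ne (hc : j ≠ c) (hs : j ≠ s) : cycle n i c s k j = 0 := by
  simp [cycle, hc, hs]

lemma add_smul_cycle_mem {t : ℝ} (hy : y ∈ TP 2 n u v) (hii' : i ≠ i') (hcs : c ≠ s)
    (ht : 0 ≤ t) (htc : t ≤ y i' c) (hts : t ≤ y i s) : y + t • cycle n i c s ∈ TP 2 n u v := by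
  refine ⟨fun k j => ?_, fun k => ?_, fun j => ?_⟩
  · have := hy.1 k j
    rcases eq_or_eq_of_ne hii' k with rfl | rfl <;> by_cases hjc : j = c <;>
      by_cases hjs : j = s <;> subst_vars <;> simp [cycle, hii'.symm, hcs.symm, *]
    all_goals linarith
  · simp only [Matrix.add_apply, Matrix.smul_apply, cycle, Matrix.of_apply, smul_eq_mul,
      sum_add_distrib, ← mul_sum, mul_sub, sum_sub_distrib, sum_ite_eq', mem_univ, hy.2.1]
    ring
  · rw [← hy.2.2 j]
    fin_cases i <;> simp [Fin.sum_univ_two, cycle] <;> ring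

lemma isExtreme_segment_add_smul_cycle (hy : y ∈ TP 2 n u v)
    (hpure : ∀ j, j ≠ c → j ≠ s → ∃ k, y k j = 0) (hii' : i ≠ i') (hcs : c ≠ s) (hyc : y i c = 0) :
    IsExtreme ℝ (TP 2 n u v) (segment ℝ y (y + min (v c) (y i s) • cycle n i c s)) := by
  set t := min (v c) (y i s)
  set z := y + t • cycle n i c s
  have ht : 0 ≤ t := le_min (by linarith [add_eq_of_ne hy hii' c, hy.1 i' c]) (hy.1 i s)
  have hz : z ∈ TP 2 n u v :=
    add_smul_cycle_mem hy hii' hcs ht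
      (by linarith [add_eq_of_ne hy hii' c, min_le_left (v c) (y i s)]) (min_le_right _ _)
  have hzy : ∀ k j, j ≠ c → j ≠ s → z k j = y k j := fun k j hjc hjs => by
    simp [z, cycle_apply_of_ne hjc hjs]
  convert isExtreme_zeroFace (u := u) (v := v) {p | p.2 ≠ c ∧ p.2 ≠ s ∧ y p.1 p.2 = 0}
  refine Set.Subset.antisymm ((convex_zeroFace _).segment_subset ⟨hy, fun p hp => hp.2.2⟩
    ⟨hz, fun p hp => (hzy _ _ hp.1 hp.2.1).trans hp.2.2⟩) ?_
  rintro w ⟨hw, hwZ⟩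
  have hwy : ∀ k j, j ≠ c → j ≠ s → w k j = y k j := fun k j hjc hjs => by
    obtain ⟨l, hl⟩ := hpure j hjc hjs
    exact apply_eq_of_apply_eq hw hy (by rw [hl]; exact hwZ (l, j) ⟨hjc, hjs, hl⟩) k
  refine mem_segment_of_eqOn hy hz hw hcs hzy hwy (i := i) ?_
  have hzc : z i c = t := by simp [z, cycle, hyc, hcs]
  rw [hzc, hyc, segment_eq_Icc ht]
  have := add_eq_add_of_eqOn hw hy hcs i fun j hjc hjs => hwy i j hjc hjs
  exact ⟨hw.1 i c, le_min (apply_le hw i c) (by linarith [hw.1 i s])⟩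

lemma IsSplitAt.add_smul_cycle_of_lt (hy : IsSplitAt u v y s) (hii' : i ≠ i') (hcs : c ≠ s)
    (hyc : y i c = 0) (h : v c < y i s) :
    IsSplitAt u v (y + v c • cycle n i c s) s ∧ (y + v c • cycle n i c s) i' c = 0 := by
  have hyi'c : y i' c = v c := by linarith [add_eq_of_ne hy.1 hii' c]
  have hzi'c : (y + v c • cycle n i c s) i' c = 0 := by simp [cycle, hii'.symm, hcs, hyi'c]
  refine ⟨⟨add_smul_cycle_mem hy.1 hii' hcs (hyi'c ▸ hy.1.1 i' c) hyi'c.ge h.le, fun k => ?_,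
    fun j hjs => ?_⟩, hzi'c⟩
  · rcases eq_or_eq_of_ne hii' k with rfl | rfl
    · simp [cycle, hcs.symm, h]
    · simp [cycle, hii'.symm, hcs.symm]
      linarith [hy.2.1 k, hyi'c ▸ hy.1.1 k c]
  · rcases eq_or_ne j c with rfl | hjc
    · exact ⟨i', hzi'c⟩
    · obtain ⟨k, hk⟩ := hy.2.2 j hjs
      exact ⟨k, by simp [cycle_apply_of_ne hjc hjs, hk]⟩

lemma IsSplitAt.add_smul_cycle_of_gt (hy : IsSplitAt u v y s) (hii' : i ≠ i') (hcs : c ≠ s)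
    (hyc : y i c = 0) (h : y i s < v c) :
    IsSplitAt u v (y + y i s • cycle n i c s) c ∧ (y + y i s • cycle n i c s) i s = 0 := by
  have hyi'c : y i' c = v c := by linarith [add_eq_of_ne hy.1 hii' c]
  have hzis : (y + y i s • cycle n i c s) i s = 0 := by simp [cycle, hcs.symm]
  refine ⟨⟨add_smul_cycle_mem hy.1 hii' hcs (hy.2.1 i).le (hyi'c ▸ h.le) le_rfl, fun k => ?_,
    fun j hjc => ?_⟩, hzis⟩
  · rcases eq_or_eq_of_ne hii' k with rfl | rfl
    · simp [cycle, hcs, hyc, hy.2.1 k]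
    · simp [cycle, hii'.symm, hcs, hyi'c, h]
  · rcases eq_or_ne j s with rfl | hjs
    · exact ⟨i, hzis⟩
    · obtain ⟨k, hk⟩ := hy.2.2 j hjs
      exact ⟨k, by simp [cycle_apply_of_ne hjc hjs, hk]⟩

lemma IsSplitAt.apply_ne_of_nonDeg (hn : 0 < n) (hv : ∀ j, 0 < v j) (hnd : NonDeg 2 n u v)
    (hy : IsSplitAt u v y s) (hii' : i ≠ i') (hcs : c ≠ s) (hyc : y i c = 0) : y i s ≠ v c := by
  intro h
  have hyi'c : y i' c = v c := by linarith [add_eq_of_ne hy.1 hii' c]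
  refine not_forall_exists_apply_eq_zero hn hv hnd
    (add_smul_cycle_mem hy.1 hii' hcs (h ▸ hy.1.1 i s) hyi'c.ge h.ge) fun j => ?_
  rcases eq_or_ne j c with rfl | hjc
  · exact ⟨i', by simp [cycle, hii'.symm, hcs, hyi'c]⟩
  rcases eq_or_ne j s with rfl | hjs
  · exact ⟨i, by simp [cycle, hcs.symm, h]⟩
  · obtain ⟨k, hk⟩ := hy.2.2 j hjs
    exact ⟨k, by simp [cycle_apply_of_ne hjc hjs, hk]⟩

lemma IsSplitAt.pos_of_pos_add_smul_cycle {t : ℝ} (hy : IsSplitAt u v y s) (hii' : i ≠ i')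
    (hcs : c ≠ s) (ht : 0 ≤ t) (hkj : 0 < (y + t • cycle n i c s) k j) :
    (k, j) = (i, c) ∨ 0 < y k j := by
  rcases eq_or_ne j s with rfl | hjs
  · exact .inr (hy.2.1 k)
  rcases eq_or_ne j c with rfl | hjc
  · rcases eq_or_eq_of_ne hii' k with rfl | rfl
    · exact .inl rfl
    · simp [cycle, hii'.symm, hcs] at hkj
      exact .inr (by linarith)
  · right
    simpa [cycle_apply_of_ne hjc hjs] using hkj

/-- A pivot step of the simplex method: the entering cell `(i, c)` leaves the basis of a
neighbouring vertex through `(i', c)` or `(i, s)`, whichever empties first; a tie would produce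
a degenerate vertex. -/
lemma exists_adjVert_pivot (hn : 0 < n) (hv : ∀ j, 0 < v j) (hnd : NonDeg 2 n u v)
    (hy : IsSplitAt u v y s) (hii' : i ≠ i') (hcs : c ≠ s) (hyc : y i c = 0) :
    ∃ z, (graph 2 n u v).Adj y z ∧ (∀ k j, 0 < z k j → (k, j) = (i, c) ∨ 0 < y k j) ∧
      ((v c < y i s ∧ IsSplitAt u v z s ∧ z i' c = 0) ∨
        (y i s < v c ∧ IsSplitAt u v z c ∧ z i s = 0)) := by
  have ht : 0 < min (v c) (y i s) := lt_min (hv c) (hy.2.1 i)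
  have hout : (v c < y i s ∧ IsSplitAt u v (y + min (v c) (y i s) • cycle n i c s) s ∧
        (y + min (v c) (y i s) • cycle n i c s) i' c = 0) ∨
      (y i s < v c ∧ IsSplitAt u v (y + min (v c) (y i s) • cycle n i c s) c ∧
        (y + min (v c) (y i s) • cycle n i c s) i s = 0) := by
    rcases lt_or_gt_of_ne (hy.apply_ne_of_nonDeg hn hv hnd hii' hcs hyc).symm with h | h
    · rw [min_eq_left h.le]
      exact .inl ⟨h, hy.add_smul_cycle_of_lt hii' hcs hyc h⟩
    · rw [min_eq_right h.le]
      exact .inr ⟨h, hy.add_smul_cycle_of_gt hii' hcs hyc h⟩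
  refine ⟨_, ⟨fun h => ?_, hy.mem_extremePoints, ?_, isExtreme_segment_add_smul_cycle hy.1
    (fun j _ hjs => hy.2.2 j hjs) hii' hcs hyc⟩, fun k j => hy.pos_of_pos_add_smul_cycle hii' hcs
    ht.le, hout⟩
  · have := congrFun (congrFun h i) c
    simp [cycle, hcs] at this
    linarith
  · rcases hout with ⟨-, hz, -⟩ | ⟨-, hz, -⟩ <;> exact hz.mem_extremePoints

lemma exists_pos_apply (hv : ∀ j, 0 < v j) (hy : y ∈ TP 2 n u v) (j : Fin n) : ∃ k, 0 < y k j := by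
  by_contra! h
  linarith [add_eq_of_ne hy (show (0 : Fin 2) ≠ 1 by decide) j, h 0, h 1, hv j]

end TwoRows

section Walks

variable {n : ℕ} {u : Fin 2 → ℝ} {v : Fin n → ℝ} {y z F : Matrix (Fin 2) (Fin n) ℝ}
  {f : Fin n} {i r : Fin 2}

noncomputable def supportGap (F y : Matrix (Fin 2) (Fin n) ℝ) : ℕ :=
  #(suppF 2 n y \ suppF 2 n F)

lemma sdiff_suppF_subset {q : Fin 2 × Fin n} (hzy : ∀ k j, 0 < z k j → (k, j) = q ∨ 0 < y k j)
    (hq : 0 < F q.1 q.2) : suppF 2 n z \ suppF 2 n F ⊆ suppF 2 n y \ suppF 2 n F := by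
  intro p hp
  rw [mem_sdiff, mem_suppF, mem_suppF] at hp ⊢
  refine ⟨(hzy p.1 p.2 hp.1).resolve_left fun h => hp.2 ?_, hp.2⟩
  rw [← h] at hq
  exact hq

lemma supportGap_lt_of_pivot {q : Fin 2 × Fin n} {k : Fin 2} {j : Fin n}
    (hzy : ∀ k j, 0 < z k j → (k, j) = q ∨ 0 < y k j) (hq : 0 < F q.1 q.2) (hy : 0 < y k j)
    (hF : F k j = 0) (hz : z k j = 0) : supportGap F z < supportGap F y := by
  refine card_lt_card ((ssubset_iff_of_subset (sdiff_suppF_subset hzy hq)).2 ⟨(k, j), ?_, ?_⟩)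
  · simp [mem_suppF, hy, hF]
  · simp [mem_suppF, hz]

lemma eq_of_supportGap_eq_zero (hF : IsSplitAt u v F f) (hy : y ∈ TP 2 n u v)
    (h : supportGap F y = 0) : y = F := by
  refine eq_of_zero_imp_zero hF.1 hF.2.2 hy fun i j _ hFij => ?_
  have : (i, j) ∉ suppF 2 n y \ suppF 2 n F := by rw [card_eq_zero.1 h]; exact notMem_empty _
  simp only [mem_sdiff, mem_suppF, hFij, lt_irrefl, not_false_eq_true, and_true, not_lt] at this
  exact le_antisymm this (hy.1 i j)

lemma apply_le_of_pos_imp_pos {k : Fin 2} {j : Fin n} (hF : IsSplitAt u v F f)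
    (hy : y ∈ TP 2 n u v) (hjf : j ≠ f) (h : 0 < y k j → 0 < F k j) : y k j ≤ F k j := by
  rcases (hy.1 k j).eq_or_lt with h0 | hpos
  · exact h0 ▸ hF.1.1 k j
  · exact hF.apply_eq hjf (h hpos) ▸ apply_le hy k j

lemma v_lt_of_excess_in_row {R : Fin 2} {c : Fin n} (hF : IsSplitAt u v F f)
    (hy : y ∈ TP 2 n u v) (hR : ∀ p ∈ suppF 2 n y \ suppF 2 n F, p.1 = R) (hiR : i ≠ R)
    (hcf : c ≠ f) (hyic : y i c = 0) (hFRc : F R c = 0) : v c < y i f := by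
  have hle : ∀ j, j ≠ f → y i j ≤ F i j := fun j hjf =>
    apply_le_of_pos_imp_pos hF hy hjf fun hpos => by
      by_contra hF0
      exact hiR (hR (i, j) (by simp [mem_suppF, hpos, hF0]))
  linarith [sub_le_sub_of_le_of_ne hy hF.1 hcf hle, add_eq_of_ne hF.1 hiR c, hF.2.1 i]

/-- Row `r` of `y` is dominated by row `r` of `F` away from `f`, so the surplus of row `r` sits
in column `f`. -/
lemma IsSplitAt.apply_eq_zero_and_lt_of_row_le {s : Fin n} (hy : IsSplitAt u v y s)
    (hF : IsSplitAt u v F f) (hsf : s ≠ f) (hri : r ≠ i) (hFis : F i s = 0)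
    (hrow : ∀ j, 0 < y r j → 0 < F r j) : y i f = 0 ∧ y i s < v f := by
  have hle : ∀ j, j ≠ f → y r j ≤ F r j := fun j hjf => by
    rcases eq_or_ne j s with rfl | hjs
    · linarith [add_eq_of_ne hF.1 hri j, apply_le hy.1 r j]
    · exact apply_le_of_pos_imp_pos hF hy.1 hjf (hrow j)
  have hsurplus := sub_le_sub_of_le_of_ne hy.1 hF.1 hsf hle
  have hyrf : 0 < y r f := by
    linarith [add_eq_of_ne hy.1 hri s, add_eq_of_ne hF.1 hri s, hF.2.1 r, hy.2.1 i]
  refine ⟨hy.apply_eq_zero hsf.symm hyrf hri.symm, ?_⟩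
  linarith [add_eq_of_ne hy.1 hri s, add_eq_of_ne hF.1 hri s, hy.apply_eq hsf.symm hyrf, hF.2.1 r]

lemma exists_walk_of_excess_in_row (hn : 0 < n) (hv : ∀ j, 0 < v j) (hnd : NonDeg 2 n u v)
    (hF : IsSplitAt u v F f) {R : Fin 2} {y : Matrix (Fin 2) (Fin n) ℝ} (hy : IsSplitAt u v y f)
    (hR : ∀ p ∈ suppF 2 n y \ suppF 2 n F, p.1 = R) :
    ∃ p : (graph 2 n u v).Walk y F, p.length ≤ supportGap F y := by
  by_cases hyF : y = F
  · subst hyF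
    exact ⟨.nil, by simp⟩
  obtain ⟨⟨R', c⟩, hRc⟩ : (suppF 2 n y \ suppF 2 n F).Nonempty :=
    nonempty_iff_ne_empty.2 fun h => hyF (eq_of_supportGap_eq_zero hF hy.1 (card_eq_zero.2 h))
  obtain rfl : R' = R := hR _ hRc
  rw [mem_sdiff, mem_suppF, mem_suppF, not_lt] at hRc
  obtain ⟨hyRc, hFRc⟩ := hRc
  replace hFRc : F R' c = 0 := le_antisymm hFRc (hF.1.1 R' c)
  have hcf : c ≠ f := by rintro rfl; linarith [hF.2.1 R']
  obtain ⟨i, hiR⟩ := exists_ne R'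
  have hFic : 0 < F i c := by linarith [add_eq_of_ne hF.1 hiR c, hv c]
  have hyic := hy.apply_eq_zero hcf hyRc hiR
  obtain ⟨z, hadj, hzy, hout⟩ := exists_adjVert_pivot hn hv hnd hy hiR hcf hyic
  obtain ⟨-, hz, hzRc⟩ :=
    hout.resolve_right fun h => lt_asymm h.1 (v_lt_of_excess_in_row hF hy.1 hR hiR hcf hyic hFRc)
  have hlt := supportGap_lt_of_pivot hzy hFic hyRc hFRc hzRc
  obtain ⟨p, hp⟩ := exists_walk_of_excess_in_row hn hv hnd hF hz fun p hp =>
    hR p (sdiff_suppF_subset hzy hFic hp)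
  exact ⟨.cons hadj p, by rw [SimpleGraph.Walk.length_cons]; omega⟩
termination_by supportGap F y

lemma exists_walk_of_split_ne (hn : 0 < n) (hv : ∀ j, 0 < v j) (hnd : NonDeg 2 n u v)
    (hF : IsSplitAt u v F f) {y : Matrix (Fin 2) (Fin n) ℝ} {s : Fin n} (hy : IsSplitAt u v y s)
    (hsf : s ≠ f) : ∃ p : (graph 2 n u v).Walk y F, p.length ≤ supportGap F y := by
  obtain ⟨i, hFis⟩ := hF.2.2 s hsf
  obtain ⟨r, hri⟩ := exists_ne i
  by_cases hex : ∃ c, 0 < y r c ∧ F r c = 0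
  · obtain ⟨c, hyrc, hFrc⟩ := hex
    have hcs : c ≠ s := by rintro rfl; linarith [add_eq_of_ne hF.1 hri c, hv c]
    have hcf : c ≠ f := by rintro rfl; linarith [hF.2.1 r]
    have hFic : 0 < F i c := by linarith [add_eq_of_ne hF.1 hri c, hv c]
    obtain ⟨z, hadj, hzy, hout⟩ :=
      exists_adjVert_pivot hn hv hnd hy hri.symm hcs (hy.apply_eq_zero hcs hyrc hri.symm)
    rcases hout with ⟨-, hz, hzrc⟩ | ⟨-, hz, hzis⟩
    · have hlt := supportGap_lt_of_pivot hzy hFic hyrc hFrc hzrc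
      obtain ⟨p, hp⟩ := exists_walk_of_split_ne hn hv hnd hF hz hsf
      exact ⟨.cons hadj p, by rw [SimpleGraph.Walk.length_cons]; omega⟩
    · have hlt := supportGap_lt_of_pivot hzy hFic (hy.2.1 i) hFis hzis
      obtain ⟨p, hp⟩ := exists_walk_of_split_ne hn hv hnd hF hz hcf
      exact ⟨.cons hadj p, by rw [SimpleGraph.Walk.length_cons]; omega⟩
  have hrow : ∀ j, 0 < y r j → 0 < F r j := fun j hyrj =>
    (hF.1.1 r j).lt_of_ne' fun hFrj => hex ⟨j, hyrj, hFrj⟩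
  obtain ⟨hyif, hyis⟩ := hy.apply_eq_zero_and_lt_of_row_le hF hsf hri hFis hrow
  obtain ⟨z, hadj, hzy, hout⟩ := exists_adjVert_pivot hn hv hnd hy hri.symm hsf.symm hyif
  obtain ⟨-, hz, hzis⟩ := hout.resolve_left fun h => lt_asymm h.1 hyis
  have hlt := supportGap_lt_of_pivot hzy (hF.2.1 i) (hy.2.1 i) hFis hzis
  obtain ⟨p, hp⟩ := exists_walk_of_excess_in_row hn hv hnd hF hz (R := i) fun ⟨k, j⟩ hkj => by
    have hkj' := sdiff_suppF_subset hzy (hF.2.1 i) hkj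
    rw [mem_sdiff, mem_suppF, mem_suppF] at hkj'
    refine (eq_or_eq_of_ne hri k).resolve_left ?_
    rintro rfl
    exact hkj'.2 (hrow j hkj'.1)
  exact ⟨.cons hadj p, by rw [SimpleGraph.Walk.length_cons]; omega⟩
termination_by supportGap F y

lemma exists_walk (hn : 0 < n) (hv : ∀ j, 0 < v j) (hnd : NonDeg 2 n u v)
    (hF : IsSplitAt u v F f) {y : Matrix (Fin 2) (Fin n) ℝ} {s : Fin n} (hy : IsSplitAt u v y s) :
    ∃ p : (graph 2 n u v).Walk y F, p.length ≤ supportGap F y ∨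
      (p.length ≤ supportGap F y + 1 ∧ s = f ∧ ∃ i, ∃ w ∈ TP 2 n u v, w i f = 0) := by
  rcases ne_or_eq s f with hsf | hsf
  · obtain ⟨p, hp⟩ := exists_walk_of_split_ne hn hv hnd hF hy hsf
    exact ⟨p, .inl hp⟩
  subst s
  by_cases hR : ∃ R, ∀ p ∈ suppF 2 n y \ suppF 2 n F, p.1 = R
  · obtain ⟨R, hR⟩ := hR
    obtain ⟨p, hp⟩ := exists_walk_of_excess_in_row hn hv hnd hF hy hR
    exact ⟨p, .inl hp⟩
  push Not at hR
  obtain ⟨⟨R, c⟩, hRc, -⟩ := hR 0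
  rw [mem_sdiff, mem_suppF, mem_suppF, not_lt] at hRc
  obtain ⟨hyRc, hFRc⟩ := hRc
  replace hFRc : F R c = 0 := le_antisymm hFRc (hF.1.1 R c)
  have hcf : c ≠ f := by rintro rfl; linarith [hF.2.1 R]
  obtain ⟨i, hiR⟩ := exists_ne R
  have hFic : 0 < F i c := by linarith [add_eq_of_ne hF.1 hiR c, hv c]
  obtain ⟨z, hadj, hzy, hout⟩ :=
    exists_adjVert_pivot hn hv hnd hy hiR hcf (hy.apply_eq_zero hcf hyRc hiR)
  rcases hout with ⟨-, hz, hzRc⟩ | ⟨-, hz, hzif⟩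
  · have hlt := supportGap_lt_of_pivot hzy hFic hyRc hFRc hzRc
    obtain ⟨p, hp⟩ := exists_walk hn hv hnd hF hz
    refine ⟨.cons hadj p, ?_⟩
    rw [SimpleGraph.Walk.length_cons]
    rcases hp with hp | ⟨hp, hwaste⟩
    · exact .inl (by omega)
    · exact .inr ⟨by omega, hwaste⟩
  · have hle : supportGap F z ≤ supportGap F y := card_le_card (sdiff_suppF_subset hzy hFic)
    obtain ⟨p, hp⟩ := exists_walk_of_split_ne hn hv hnd hF hz hcf
    exact ⟨.cons hadj p, .inr ⟨by rw [SimpleGraph.Walk.length_cons]; omega, rfl, i, z, hz.1, hzif⟩⟩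
termination_by supportGap F y

lemma exists_walk_length_add_card_le (hn : 0 < n) (hv : ∀ j, 0 < v j) (hnd : NonDeg 2 n u v)
    (hF : IsSplitAt u v F f) {O : Matrix (Fin 2) (Fin n) ℝ} {s : Fin n} (hO : IsSplitAt u v O s) :
    ∃ (p : (graph 2 n u v).Walk O F) (T : Finset (Fin 2 × Fin n)), T.Nonempty ∧
      (∀ q, (∀ y ∈ TP 2 n u v, 0 < y q.1 q.2) → q ∈ T) ∧ p.length + #T ≤ n + 1 := by
  have hcard : supportGap F O + #(suppF 2 n O ∩ suppF 2 n F) = n + 1 := by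
    rw [supportGap, card_sdiff_add_card_inter, hnd O hO.mem_extremePoints]
    omega
  have hcrit : ∀ q, (∀ y ∈ TP 2 n u v, 0 < y q.1 q.2) → q ∈ suppF 2 n O ∩ suppF 2 n F :=
    fun q hq => mem_inter.2 ⟨mem_suppF.2 (hq O hO.1), mem_suppF.2 (hq F hF.1)⟩
  obtain ⟨p, hp | ⟨hp, rfl, i, w, hw, hwi⟩⟩ := exists_walk hn hv hnd hF hO
  · obtain ⟨k, hk⟩ := exists_pos_apply hv hF.1 s
    exact ⟨p, _, ⟨(k, s), by simp [mem_suppF, hO.2.1 k, hk]⟩, hcrit, by omega⟩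
  · obtain ⟨i', hi'⟩ := exists_ne i
    have hmem : (i, s) ∈ suppF 2 n O ∩ suppF 2 n F := by simp [mem_suppF, hO.2.1, hF.2.1]
    refine ⟨p, (suppF 2 n O ∩ suppF 2 n F).erase (i, s),
      ⟨(i', s), by simp [mem_suppF, hi', hO.2.1, hF.2.1]⟩, fun q hq => ?_, ?_⟩
    · refine mem_erase.2 ⟨?_, hcrit q hq⟩
      rintro rfl
      exact (hq w hw).ne' hwi
    · have := card_pos.2 ⟨_, hmem⟩
      rw [card_erase_of_mem hmem]
      omega

end Walks

end TransportationPolytope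

open TransportationPolytope in
theorem stmt_11_general (n : ℕ) (hn : 0 < n) (u : Fin 2 → ℝ) (v : Fin n → ℝ)
    (hv : ∀ j, 0 < v j)
    (hnd : NonDeg 2 n u v)
    (O F : Matrix (Fin 2) (Fin n) ℝ)
    (hO : O ∈ Set.extremePoints ℝ (TP 2 n u v))
    (hF : F ∈ Set.extremePoints ℝ (TP 2 n u v)) :
    ∃ k ≤ min n (n + 1 - criticalCount 2 n u v), ∃ w : ℕ → Matrix (Fin 2) (Fin n) ℝ,
      w 0 = O ∧ w k = F ∧ ∀ i < k, AdjVert 2 n u v (w i) (w (i + 1)) := by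
  obtain ⟨s, hOs⟩ := exists_isSplitAt hv hnd hO
  obtain ⟨f, hFf⟩ := exists_isSplitAt hv hnd hF
  obtain ⟨p, T, hT, hcrit, hlen⟩ := exists_walk_length_add_card_le hn hv hnd hFf hOs
  have hk := criticalCount_le_card hcrit
  have hT1 := hT.card_pos
  exact ⟨p.length, le_min (by omega) (by omega), p.getVert, p.getVert_zero, p.getVert_length,
    fun i hi => p.adj_getVert_succ hi⟩

/-- a non-degenerate 2×n transportation polytope with k critical edges has
graph diameter at most min{n, n + 1 − k}. -/
theorem stmt_11 (n : ℕ) (hn : 0 < n) (u : Fin 2 → ℝ) (v : Fin n → ℝ)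
    (hu : ∀ i, 0 < u i) (hv : ∀ j, 0 < v j) (huv : ∑ i, u i = ∑ j, v j)
    (hnd : NonDeg 2 n u v)
    (O F : Matrix (Fin 2) (Fin n) ℝ)
    (hO : O ∈ Set.extremePoints ℝ (TP 2 n u v))
    (hF : F ∈ Set.extremePoints ℝ (TP 2 n u v)) :
    ∃ k ≤ min n (n + 1 - criticalCount 2 n u v), ∃ w : ℕ → Matrix (Fin 2) (Fin n) ℝ,
      w 0 = O ∧ w k = F ∧ ∀ i < k, AdjVert 2 n u v (w i) (w (i + 1)) :=
  stmt_11_general n hn u v hv hnd O F hO hF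
end

section
/- Let P(u,v) be a non-degenerate 2×n transportation polytope and let s ∈ ℝ^{2×n} satisfy s_{1,i} − s_{2,i} ≥ s_{1,i+1} − s_{2,i+1} for all 1 ≤ i ≤ n − 1. Let j be the maximal index in {1, …, n} such that ∑_{i=1}^{j−1} v_i < u_1. Define y^F ∈ ℝ^{2×n} by y^F_{1,i} = v_i for i < j, y^F_{1,j} = u_1 − ∑_{i=1}^{j−1} v_i, y^F_{1,i} = 0 for i > j, y^F_{2,i} = 0 for i < j, y^F_{2,j} = v_j − y^F_{1,j}, and y^F_{2,i} = v_i for i > j. Then y^F ∈ P(u,v) and y^F maximizes the linear functional y ↦ ∑_{i,l} s_{il} y_{il} over P(u,v). -/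
lemma mono_aux {n : ℕ} (s : Matrix (Fin 2) (Fin n) ℝ)
    (hs : ∀ (i : Fin n) (h : (i : ℕ) + 1 < n),
      s 0 ⟨(i : ℕ) + 1, h⟩ - s 1 ⟨(i : ℕ) + 1, h⟩ ≤ s 0 i - s 1 i)
    (a b : Fin n) (hab : a ≤ b) : s 0 b - s 1 b ≤ s 0 a - s 1 a := by
  obtain ⟨k, hk⟩ : ∃ k, (b : ℕ) = (a : ℕ) + k := ⟨(b : ℕ) - (a : ℕ), by
    have := Fin.le_def.mp hab; omega⟩
  clear hab
  induction k generalizing b with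
  | zero =>
    have : b = a := Fin.ext (by omega)
    subst this; exact le_refl _
  | succ k ih =>
    have hc : (a : ℕ) + k < n := by have := b.isLt; omega
    set c : Fin n := ⟨(a : ℕ) + k, hc⟩ with hcdef
    have hb : b = ⟨(c : ℕ) + 1, by have := b.isLt; simp [hcdef]; omega⟩ := Fin.ext (by simp [hcdef]; omega)
    have h1 : s 0 b - s 1 b ≤ s 0 c - s 1 c := by
      rw [hb]; exact hs c (by have := b.isLt; simp [hcdef]; omega)
    exact le_trans h1 (ih c rfl)


/-- in a non-degenerate 2×n transportation polytope, for a cost matrix s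
with s_{1,i} − s_{2,i} non-increasing in i, if j is the maximal index with
∑_{i<j} v_i < u_1, then the greedy assignment y^F described by the lemma lies in P(u,v)
and maximizes y ↦ ∑ s_{il} y_{il} over P(u,v). -/
theorem stmt_12 (n : ℕ) (hn : 0 < n) (u : Fin 2 → ℝ) (v : Fin n → ℝ)
    (hu : ∀ i, 0 < u i) (hv : ∀ j, 0 < v j) (huv : ∑ i, u i = ∑ j, v j)
    (hnd : NonDeg 2 n u v)
    (s : Matrix (Fin 2) (Fin n) ℝ)
    (hs : ∀ (i : Fin n) (h : (i : ℕ) + 1 < n),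
      s 0 ⟨(i : ℕ) + 1, h⟩ - s 1 ⟨(i : ℕ) + 1, h⟩ ≤ s 0 i - s 1 i)
    (j : Fin n)
    (hj : ∑ i ∈ Finset.univ.filter (fun i : Fin n => i < j), v i < u 0)
    (hjmax : ∀ j' : Fin n,
      (∑ i ∈ Finset.univ.filter (fun i : Fin n => i < j'), v i < u 0) → j' ≤ j)
    (yF : Matrix (Fin 2) (Fin n) ℝ)
    (h1lt : ∀ i : Fin n, i < j → yF 0 i = v i)
    (h1j : yF 0 j = u 0 - ∑ i ∈ Finset.univ.filter (fun i : Fin n => i < j), v i)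
    (h1gt : ∀ i : Fin n, j < i → yF 0 i = 0)
    (h2lt : ∀ i : Fin n, i < j → yF 1 i = 0)
    (h2j : yF 1 j = v j - yF 0 j)
    (h2gt : ∀ i : Fin n, j < i → yF 1 i = v i) :
    yF ∈ TP 2 n u v ∧
    ∀ y ∈ TP 2 n u v, ∑ i, ∑ l, s i l * y i l ≤ ∑ i, ∑ l, s i l * yF i l := by
  -- splitting lemma
  have hsetB : Finset.univ.filter (fun i : Fin n => ¬ i < j)
      = insert j (Finset.univ.filter (fun i : Fin n => j < i)) := by
    ext i
    simp only [Finset.mem_filter, Finset.mem_univ, true_and, Finset.mem_insert, not_lt]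
    constructor
    · intro h
      rcases h.lt_or_eq with h' | h'
      · exact Or.inr h'
      · exact Or.inl h'.symm
    · rintro (rfl | h)
      · exact le_refl _
      · exact h.le
  have hjB : j ∉ Finset.univ.filter (fun i : Fin n => j < i) := by simp
  have hsplit : ∀ f : Fin n → ℝ, ∑ i, f i =
      (∑ i ∈ Finset.univ.filter (fun i : Fin n => i < j), f i) + f j
      + ∑ i ∈ Finset.univ.filter (fun i : Fin n => j < i), f i := by
    intro f
    rw [← Finset.sum_filter_add_sum_filter_not Finset.univ (fun i : Fin n => i < j) f,
      hsetB, Finset.sum_insert hjB]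
    ring
  -- upper bound on yF 0 j : u 0 ≤ ∑_{i<j} v + v j
  have hle : u 0 ≤ (∑ i ∈ Finset.univ.filter (fun i : Fin n => i < j), v i) + v j := by
    by_contra h
    push_neg at h
    by_cases hlast : (j : ℕ) + 1 < n
    · set j' : Fin n := ⟨(j : ℕ) + 1, hlast⟩ with hj'def
      have hfil : Finset.univ.filter (fun i : Fin n => i < j')
          = insert j (Finset.univ.filter (fun i : Fin n => i < j)) := by
        ext i
        simp only [Finset.mem_filter, Finset.mem_univ, true_and, Finset.mem_insert,
          Fin.lt_def, hj'def, Fin.ext_iff]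
        omega
      have hjnot : j ∉ Finset.univ.filter (fun i : Fin n => i < j) := by simp
      have : ∑ i ∈ Finset.univ.filter (fun i : Fin n => i < j'), v i < u 0 := by
        rw [hfil, Finset.sum_insert hjnot]; linarith
      have := hjmax j' this
      simp [Fin.le_def, hj'def] at this
    · -- j is last index
      have hBempty : Finset.univ.filter (fun i : Fin n => j < i) = ∅ := by
        ext i
        simp only [Finset.mem_filter, Finset.mem_univ, true_and, Fin.lt_def,
          Finset.notMem_empty, iff_false]
        have := i.isLt; omega
      have hvsum : ∑ i, v i = (∑ i ∈ Finset.univ.filter (fun i : Fin n => i < j), v i) + v j := by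
        rw [hsplit v, hBempty, Finset.sum_empty]; ring
      have hu2 : ∑ i : Fin 2, u i = u 0 + u 1 := by simp [Fin.sum_univ_two]
      have := hu 1
      rw [hu2, hvsum] at huv
      linarith
  -- membership in TP
  have hrow0 : ∑ i, yF 0 i = u 0 := by
    rw [hsplit (yF 0), h1j]
    rw [Finset.sum_congr rfl (fun i hi => h1lt i (Finset.mem_filter.mp hi).2),
      Finset.sum_congr rfl (fun i hi => h1gt i (Finset.mem_filter.mp hi).2)]
    simp
  have hrow1 : ∑ i, yF 1 i = u 1 := by
    rw [hsplit (yF 1), h2j, h1j]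
    rw [Finset.sum_congr rfl (fun i hi => h2lt i (Finset.mem_filter.mp hi).2),
      Finset.sum_congr rfl (fun i hi => h2gt i (Finset.mem_filter.mp hi).2)]
    have hvv := hsplit v
    rw [Fin.sum_univ_two] at huv
    rw [Finset.sum_const_zero]
    linarith
  have hmem : yF ∈ TP 2 n u v := by
    refine ⟨?_, ?_, ?_⟩
    · intro i l
      match i with
      | 0 =>
        rcases lt_trichotomy l j with h | h | h
        · rw [h1lt l h]; exact (hv l).le
        · subst h; rw [h1j]; linarith
        · rw [h1gt l h]
      | 1 =>
        rcases lt_trichotomy l j with h | h | h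
        · rw [h2lt l h]
        · subst h; rw [h2j, h1j]; linarith
        · rw [h2gt l h]; exact (hv l).le
    · intro i
      match i with
      | 0 => exact hrow0
      | 1 => exact hrow1
    · intro l
      rw [Fin.sum_univ_two]
      rcases lt_trichotomy l j with h | h | h
      · rw [h1lt l h, h2lt l h]; ring
      · subst h; rw [h2j]; ring
      · rw [h1gt l h, h2gt l h]; ring
  refine ⟨hmem, ?_⟩
  intro y hy
  obtain ⟨hy0, hyr, hyc⟩ := hy
  obtain ⟨hF0, hFr, hFc⟩ := hmem
  -- column relation
  have hy1 : ∀ l, y 1 l = v l - y 0 l := by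
    intro l; have := hyc l; rw [Fin.sum_univ_two] at this; linarith
  have hF1 : ∀ l, yF 1 l = v l - yF 0 l := by
    intro l; have := hFc l; rw [Fin.sum_univ_two] at this; linarith
  have key : ∑ l, (s 0 l - s 1 l) * y 0 l ≤ ∑ l, (s 0 l - s 1 l) * yF 0 l := by
    have hzero : ∑ l, (s 0 j - s 1 j) * (yF 0 l - y 0 l) = 0 := by
      rw [← Finset.mul_sum, Finset.sum_sub_distrib, hFr 0, hyr 0]
      ring
    have hterm : ∀ l : Fin n, (s 0 j - s 1 j) * (yF 0 l - y 0 l)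
        ≤ (s 0 l - s 1 l) * (yF 0 l - y 0 l) := by
      intro l
      rcases lt_trichotomy l j with h | h | h
      · have hd : s 0 j - s 1 j ≤ s 0 l - s 1 l := mono_aux s hs l j h.le
        have hyv : y 0 l ≤ v l := by have := hy0 1 l; rw [hy1 l] at this; linarith
        have : 0 ≤ yF 0 l - y 0 l := by rw [h1lt l h]; linarith
        nlinarith
      · subst h; ring_nf; exact le_refl _
      · have hd : s 0 l - s 1 l ≤ s 0 j - s 1 j := mono_aux s hs j l h.le
        have : yF 0 l - y 0 l ≤ 0 := by rw [h1gt l h]; linarith [hy0 0 l]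
        nlinarith
    have : ∑ l, (s 0 j - s 1 j) * (yF 0 l - y 0 l) ≤ ∑ l, (s 0 l - s 1 l) * (yF 0 l - y 0 l) :=
      Finset.sum_le_sum (fun l _ => hterm l)
    rw [hzero] at this
    have hsub : ∑ l, (s 0 l - s 1 l) * (yF 0 l - y 0 l)
        = ∑ l, (s 0 l - s 1 l) * yF 0 l - ∑ l, (s 0 l - s 1 l) * y 0 l := by
      rw [← Finset.sum_sub_distrib]; congr 1; ext l; ring
    rw [hsub] at this
    linarith
  rw [Fin.sum_univ_two, Fin.sum_univ_two]
  have hrw : ∀ z : Matrix (Fin 2) (Fin n) ℝ, (∀ l, z 1 l = v l - z 0 l) →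
      (∑ l, s 0 l * z 0 l) + ∑ l, s 1 l * z 1 l
      = (∑ l, s 1 l * v l) + ∑ l, (s 0 l - s 1 l) * z 0 l := by
    intro z hz
    have : ∀ l : Fin n, s 0 l * z 0 l + s 1 l * z 1 l
        = s 1 l * v l + (s 0 l - s 1 l) * z 0 l := by
      intro l; rw [hz l]; ring
    rw [← Finset.sum_add_distrib, ← Finset.sum_add_distrib]
    exact Finset.sum_congr rfl (fun l _ => this l)
  rw [hrw y hy1, hrw yF hF1]
  linarith
end

section
/- Let P(u,v) be a non-degenerate 2×n transportation polytope and let s ∈ ℝ^{2×n} satisfy s_{1,i} − s_{2,i} ≥ s_{1,i+1} − s_{2,i+1} for all 1 ≤ i ≤ n − 1. Let F be a vertex of P(u,v) maximizing y ↦ ∑_{i,l} s_{il} y_{il} over P(u,v), and let O ≠ F be a vertex of P(u,v) whose set of mixed demands equals the set of mixed demands of F. Then for every vertex C adjacent to O such that supp(C) \ supp(O) ⊆ supp(F), one has ∑_{i,l} s_{il} C_{il} ≥ ∑_{i,l} s_{il} O_{il}; that is, any pivot inserting an edge of supp(F) \ supp(O) is non-decreasing for s. -/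
/-- The support of a matrix, as a set. -/
def suppS (m n : ℕ) (y : Matrix (Fin m) (Fin n) ℝ) : Set (Fin m × Fin n) :=
  {p | 0 < y p.1 p.2}

/-- The mixed demands of a 2×n assignment: demand indices receiving positive flow
from both supplies. -/
def MixedDemands (n : ℕ) (y : Matrix (Fin 2) (Fin n) ℝ) : Set (Fin n) :=
  {j | 0 < y 0 j ∧ 0 < y 1 j}

/-- pivots from O inserting only edges of supp(F) are non-decreasing for s
when O and the s-maximal vertex F have the same mixed demands. -/
theorem stmt_13 (n : ℕ) (hn : 0 < n) (u : Fin 2 → ℝ) (v : Fin n → ℝ)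
    (hu : ∀ i, 0 < u i) (hv : ∀ j, 0 < v j) (huv : ∑ i, u i = ∑ j, v j)
    (hnd : NonDeg 2 n u v)
    (s : Matrix (Fin 2) (Fin n) ℝ)
    (hs : ∀ (i : Fin n) (h : (i : ℕ) + 1 < n),
      s 0 ⟨(i : ℕ) + 1, h⟩ - s 1 ⟨(i : ℕ) + 1, h⟩ ≤ s 0 i - s 1 i)
    (F : Matrix (Fin 2) (Fin n) ℝ)
    (hFv : F ∈ Set.extremePoints ℝ (TP 2 n u v))
    (hFmax : ∀ y ∈ TP 2 n u v, ∑ i, ∑ l, s i l * y i l ≤ ∑ i, ∑ l, s i l * F i l)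
    (O : Matrix (Fin 2) (Fin n) ℝ)
    (hOv : O ∈ Set.extremePoints ℝ (TP 2 n u v))
    (hOF : O ≠ F)
    (hmix : MixedDemands n O = MixedDemands n F) :
    ∀ C : Matrix (Fin 2) (Fin n) ℝ, AdjVert 2 n u v O C →
      suppS 2 n C \ suppS 2 n O ⊆ suppS 2 n F →
      ∑ i, ∑ l, s i l * O i l ≤ ∑ i, ∑ l, s i l * C i l := by
  intro C hadj hsupp
  have hC : C ∈ TP 2 n u v := hadj.2.2.1.1
  have hO : O ∈ TP 2 n u v := hOv.1
  have hF : F ∈ TP 2 n u v := hFv.1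
  -- key: wherever C exceeds O, F is positive
  have key : ∀ p : Fin 2 × Fin n, O p.1 p.2 < C p.1 p.2 → 0 < F p.1 p.2 := by
    rintro ⟨i, j⟩ h
    rcases eq_or_lt_of_le (hO.1 i j) with h0 | h0
    · exact hsupp ⟨lt_of_le_of_lt h0.le h, by simp [suppS, ← h0]⟩
    · -- column j is mixed in O, hence in F
      have hcolO := hO.2.2 j
      have hcolC := hC.2.2 j
      rw [Fin.sum_univ_two] at hcolO hcolC
      have hmixO : j ∈ MixedDemands n O := by
        fin_cases i
        · exact ⟨h0, by have := hC.1 1 j; simp at h hcolO hcolC ⊢; linarith⟩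
        · exact ⟨by have := hC.1 0 j; simp at h hcolO hcolC ⊢; linarith, h0⟩
      have hmixF : j ∈ MixedDemands n F := hmix ▸ hmixO
      fin_cases i
      · exact hmixF.1
      · exact hmixF.2
  -- choose ε > 0 with ε * (C p - O p) ≤ F p wherever C p > O p
  obtain ⟨ε, hεpos, hεle⟩ :
      ∃ ε : ℝ, 0 < ε ∧ ∀ p : Fin 2 × Fin n, O p.1 p.2 < C p.1 p.2 →
        ε * (C p.1 p.2 - O p.1 p.2) ≤ F p.1 p.2 := by
    set T : Finset (Fin 2 × Fin n) :=
      Finset.univ.filter (fun p => O p.1 p.2 < C p.1 p.2) with hT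
    by_cases hne : T.Nonempty
    · refine ⟨T.inf' hne (fun p => F p.1 p.2 / (C p.1 p.2 - O p.1 p.2)), ?_, ?_⟩
      · rw [Finset.lt_inf'_iff]
        intro p hp
        have hp' : O p.1 p.2 < C p.1 p.2 := by simpa [hT] using hp
        exact div_pos (key p hp') (by linarith)
      · intro p hp
        have hmem : p ∈ T := by simp [hT, hp]
        have := Finset.inf'_le (fun p => F p.1 p.2 / (C p.1 p.2 - O p.1 p.2)) hmem
        have hd : 0 < C p.1 p.2 - O p.1 p.2 := by linarith
        calc T.inf' hne (fun p => F p.1 p.2 / (C p.1 p.2 - O p.1 p.2)) * (C p.1 p.2 - O p.1 p.2)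
            ≤ F p.1 p.2 / (C p.1 p.2 - O p.1 p.2) * (C p.1 p.2 - O p.1 p.2) := by
              exact mul_le_mul_of_nonneg_right this hd.le
          _ = F p.1 p.2 := div_mul_cancel₀ _ hd.ne'
    · refine ⟨1, one_pos, fun p hp => ?_⟩
      exact absurd ⟨p, Finset.mem_filter.mpr ⟨Finset.mem_univ p, hp⟩⟩ hne
  -- the perturbed point
  set y : Matrix (Fin 2) (Fin n) ℝ := fun i j => F i j + ε * (O i j - C i j) with hy
  have hyTP : y ∈ TP 2 n u v := by
    refine ⟨?_, ?_, ?_⟩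
    · intro i j
      rcases le_or_gt (C i j) (O i j) with h | h
      · have h1 := hF.1 i j
        have : 0 ≤ ε * (O i j - C i j) := mul_nonneg hεpos.le (by linarith)
        simp only [hy]; linarith
      · have := hεle (i, j) h
        simp only [hy]; linarith
    · intro i
      have h1 := hF.2.1 i
      have h2 := hO.2.1 i
      have h3 := hC.2.1 i
      simp only [hy, mul_sub]
      rw [Finset.sum_add_distrib, Finset.sum_sub_distrib, ← Finset.mul_sum, ← Finset.mul_sum,
        h1, h2, h3]
      ring
    · intro j
      have h1 := hF.2.2 j
      have h2 := hO.2.2 j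
      have h3 := hC.2.2 j
      simp only [hy, mul_sub]
      rw [Finset.sum_add_distrib, Finset.sum_sub_distrib, ← Finset.mul_sum, ← Finset.mul_sum,
        h1, h2, h3]
      ring
  have hle := hFmax y hyTP
  have hexp : ∑ i, ∑ l, s i l * y i l
      = ∑ i, ∑ l, s i l * F i l
        + ε * (∑ i, ∑ l, s i l * O i l) - ε * (∑ i, ∑ l, s i l * C i l) := by
    have hterm : ∀ i l, s i l * y i l
        = s i l * F i l + ε * (s i l * O i l) - ε * (s i l * C i l) := by
      intro i l; simp only [hy]; ring
    simp only [hterm, Finset.sum_add_distrib, Finset.sum_sub_distrib, ← Finset.mul_sum]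
  rw [hexp] at hle
  nlinarith [hle, hεpos]
end

section
/- Let P(u,v) be a non-degenerate 2×n transportation polytope and let s ∈ ℝ^{2×n} satisfy s_{1,i} − s_{2,i} ≥ s_{1,i+1} − s_{2,i+1} for all 1 ≤ i ≤ n − 1. Let F be a vertex of P(u,v) maximizing y ↦ ∑_{i,l} s_{il} y_{il} over P(u,v), and let O be a vertex of P(u,v) whose set of mixed demands is different from the set of mixed demands of F. Then there exists a vertex C adjacent to O such that supp(C) \ supp(O) ⊆ supp(F) and ∑_{i,l} s_{il} C_{il} ≥ ∑_{i,l} s_{il} O_{il}; that is, there is a non-decreasing pivot inserting an edge of supp(F). -/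
/-!
In a non-degenerate `2 × n` transportation polytope each vertex has exactly one mixed demand and
all other demands are leaves, so a vertex is determined by its zero pattern (its support is a
tree). Relaxing one zero `(a, l)` of a vertex `O` with mixed demand `j₀` gives the face
`[O, C]`, where `C` pushes flow around the cycle `(a, l), (b, l), (b, j₀), (a, j₀)`; this is an
edge whose objective change has the sign of `dₗ - d_{j₀}` (for `a = 0`), with
`dⱼ = s₀ⱼ - s₁ⱼ`.

Optimality of `F` against the same kind of pivots gives `dₗ ≥ d_{j_F}` whenever `F₀ₗ > 0` and
`dₗ ≤ d_{j_F}` whenever `F₁ₗ > 0`. Say `d_{j_O} ≤ d_{j_F}`. An edge of row `0` of `F` missing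
from `O` is then a non-decreasing pivot. Otherwise row `0` of `O` carries the whole demand of
every column where row `0` of `F` is positive; counting the mass of row `0` shows that
`F₀,j_O > 0`, so `d_{j_O} = d_{j_F}`, and an edge of row `1` of `F` missing from `O` works: it
exists, since otherwise `j_F` would be mixed in `O`.
-/

open Finset

variable {m n : ℕ}

lemma Fin.two_eq_or_eq {a b : Fin 2} (hab : a ≠ b) (i : Fin 2) : i = a ∨ i = b := by
  fin_cases a <;> fin_cases b <;> fin_cases i <;> simp_all

lemma Fin.sum_univ_two_of_ne {a b : Fin 2} (hab : a ≠ b) (f : Fin 2 → ℝ) :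
    ∑ i, f i = f a + f b := by
  fin_cases a <;> fin_cases b <;> simp_all [Fin.sum_univ_two, add_comm]

lemma add_eq_of_mem_TP {u : Fin 2 → ℝ} {v : Fin n → ℝ} {y : Matrix (Fin 2) (Fin n) ℝ}
    (hy : y ∈ TP 2 n u v) {a b : Fin 2} (hab : a ≠ b) (j : Fin n) : y a j + y b j = v j := by
  rw [← hy.2.2 j, Fin.sum_univ_two_of_ne hab]

def zeroFace (u : Fin m → ℝ) (v : Fin n → ℝ) (Z : Set (Fin m × Fin n)) :
    Set (Matrix (Fin m) (Fin n) ℝ) :=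
  {y ∈ TP m n u v | ∀ p ∈ Z, y p.1 p.2 = 0}

lemma convex_zeroFace (u : Fin m → ℝ) (v : Fin n → ℝ) (Z : Set (Fin m × Fin n)) :
    Convex ℝ (zeroFace u v Z) := by
  rintro x ⟨⟨hx0, hx1, hx2⟩, hxZ⟩ y ⟨⟨hy0, hy1, hy2⟩, hyZ⟩ α β hα hβ hαβ
  refine ⟨⟨fun i j => ?_, fun i => ?_, fun j => ?_⟩, fun p hp => ?_⟩
  · simp only [Matrix.add_apply, Matrix.smul_apply, smul_eq_mul]
    exact add_nonneg (mul_nonneg hα (hx0 i j)) (mul_nonneg hβ (hy0 i j))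
  · simp only [Matrix.add_apply, Matrix.smul_apply, smul_eq_mul, sum_add_distrib, ← mul_sum,
      hx1, hy1]
    linear_combination u i * hαβ
  · simp only [Matrix.add_apply, Matrix.smul_apply, smul_eq_mul, sum_add_distrib, ← mul_sum,
      hx2, hy2]
    linear_combination v j * hαβ
  · simp [hxZ p hp, hyZ p hp]

lemma isExtreme_zeroFace (u : Fin m → ℝ) (v : Fin n → ℝ) (Z : Set (Fin m × Fin n)) :
    IsExtreme ℝ (TP m n u v) (zeroFace u v Z) := by
  refine ⟨Set.sep_subset _ _, fun x hx y hy z ⟨_, hzZ⟩ ⟨α, β, hα, hβ, _, hz⟩ =>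
    ⟨hx, fun p hp => ?_⟩⟩
  have hp : α * x p.1 p.2 + β * y p.1 p.2 = 0 := by
    rw [← hzZ p hp, ← hz]; simp
  have := (add_eq_zero_iff_of_nonneg (mul_nonneg hα.le (hx.1 _ _))
    (mul_nonneg hβ.le (hy.1 _ _))).1 hp
  exact (mul_eq_zero.1 this.1).resolve_left hα.ne'

lemma right_mem_extremePoints_segment {𝕜 E : Type*} [Field 𝕜] [LinearOrder 𝕜]
    [IsStrictOrderedRing 𝕜] [AddCommGroup E] [Module 𝕜 E] (x y : E) :
    y ∈ (segment 𝕜 x y).extremePoints 𝕜 := by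
  rcases eq_or_ne x y with rfl | hxy
  · simp
  refine ⟨right_mem_segment _ _ _, ?_⟩
  rintro _ hz₁ _ hz₂ ⟨α, β, hα, hβ, hαβ, hy⟩
  rw [segment_eq_image'] at hz₁ hz₂
  obtain ⟨s₁, ⟨hs₁, hs₁'⟩, rfl⟩ := hz₁
  obtain ⟨s₂, ⟨hs₂, hs₂'⟩, rfl⟩ := hz₂
  have hcoef : (1 - (α * s₁ + β * s₂)) • (y - x) = 0 := by
    linear_combination (norm := module) -hy + hαβ • x
  have hs : 1 - (α * s₁ + β * s₂) = 0 :=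
    (smul_eq_zero.1 hcoef).resolve_right (sub_ne_zero.2 hxy.symm)
  obtain rfl : s₁ = 1 := by nlinarith
  simp

def pivotDir (a b : Fin m) (l j : Fin n) : Matrix (Fin m) (Fin n) ℝ :=
  Matrix.vecMulVec (Pi.single a 1 - Pi.single b 1) (Pi.single l 1 - Pi.single j 1)

lemma pivotDir_apply (a b i : Fin m) (l j k : Fin n) :
    pivotDir a b l j i k =
      ((if i = a then 1 else 0) - if i = b then 1 else 0) *
        ((if k = l then 1 else 0) - if k = j then 1 else 0) := by
  simp [pivotDir, Matrix.vecMulVec_apply, Pi.single_apply]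

lemma sum_pivotDir_row (a b i : Fin m) (l j : Fin n) : ∑ k, pivotDir a b l j i k = 0 := by
  simp [pivotDir_apply, ← mul_sum, sum_sub_distrib]

lemma sum_pivotDir_col (a b : Fin m) (l j k : Fin n) : ∑ i, pivotDir a b l j i k = 0 := by
  simp [pivotDir_apply, ← sum_mul, sum_sub_distrib]

lemma sum_mul_pivotDir (s : Matrix (Fin m) (Fin n) ℝ) (a b : Fin m) (l j : Fin n) :
    ∑ i, ∑ k, s i k * pivotDir a b l j i k = s a l - s a j - s b l + s b j := by
  simp only [pivotDir_apply, mul_sub, mul_ite, mul_one, mul_zero, sum_sub_distrib, sum_ite_eq',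
    mem_univ, ↓reduceIte]
  ring

lemma sum_mul_add_smul (s y D : Matrix (Fin m) (Fin n) ℝ) (t : ℝ) :
    ∑ i, ∑ k, s i k * (y + t • D) i k = ∑ i, ∑ k, s i k * y i k + t * ∑ i, ∑ k, s i k * D i k := by
  simp only [Matrix.add_apply, Matrix.smul_apply, smul_eq_mul, mul_add, sum_add_distrib, mul_sum,
    mul_left_comm]

lemma add_smul_pivotDir_mem_TP {u : Fin m → ℝ} {v : Fin n → ℝ} {y : Matrix (Fin m) (Fin n) ℝ}
    (hy : y ∈ TP m n u v) {a b : Fin m} {l j : Fin n} {t : ℝ} (ht : 0 ≤ t) (hbl : t ≤ y b l)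
    (haj : t ≤ y a j) : y + t • pivotDir a b l j ∈ TP m n u v := by
  refine ⟨fun i k => ?_, fun i => ?_, fun k => ?_⟩
  · have := hy.1 i k
    simp only [Matrix.add_apply, Matrix.smul_apply, smul_eq_mul, pivotDir_apply]
    split_ifs <;> subst_vars <;> linarith
  · simp [sum_add_distrib, ← mul_sum, sum_pivotDir_row, hy.2.1 i]
  · simp [sum_add_distrib, ← mul_sum, sum_pivotDir_col, hy.2.2 k]

lemma pivot_gain_nonpos_of_max {u : Fin m → ℝ} {v : Fin n → ℝ} {s F : Matrix (Fin m) (Fin n) ℝ}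
    (hF : F ∈ TP m n u v)
    (hmax : ∀ y ∈ TP m n u v, ∑ i, ∑ k, s i k * y i k ≤ ∑ i, ∑ k, s i k * F i k)
    {a b : Fin m} {l j : Fin n} (hbl : 0 < F b l) (haj : 0 < F a j) :
    s a l - s a j - s b l + s b j ≤ 0 := by
  have hε : 0 < min (F b l) (F a j) := lt_min hbl haj
  have h := hmax _ (add_smul_pivotDir_mem_TP hF hε.le (min_le_left _ _) (min_le_right _ _))
  rw [sum_mul_add_smul, sum_mul_pivotDir] at h
  nlinarith

def IsSoleMixedDemand (y : Matrix (Fin 2) (Fin n) ℝ) (j₀ : Fin n) : Prop :=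
  (∀ i, 0 < y i j₀) ∧ ∀ j ≠ j₀, ∃ i, y i j = 0

lemma IsSoleMixedDemand.mixedDemands_eq {y : Matrix (Fin 2) (Fin n) ℝ} {j₀ : Fin n}
    (h : IsSoleMixedDemand y j₀) : MixedDemands n y = {j₀} := by
  ext j
  refine ⟨fun ⟨h0, h1⟩ => by_contra fun hj => ?_, fun hj => hj ▸ ⟨h.1 0, h.1 1⟩⟩
  obtain ⟨i, hi⟩ := h.2 j hj
  fin_cases i
  · exact h0.ne' hi
  · exact h1.ne' hi

lemma IsSoleMixedDemand.eq_zero_of_pos {y : Matrix (Fin 2) (Fin n) ℝ} {j₀ j : Fin n}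
    (h : IsSoleMixedDemand y j₀) (hj : j ≠ j₀) {a b : Fin 2} (hab : a ≠ b) (ha : 0 < y a j) :
    y b j = 0 := by
  obtain ⟨i, hi⟩ := h.2 j hj
  rcases Fin.two_eq_or_eq hab i with rfl | rfl
  · exact absurd hi ha.ne'
  · exact hi

lemma card_suppF_eq {u : Fin 2 → ℝ} {v : Fin n → ℝ} (hv : ∀ j, 0 < v j)
    {y : Matrix (Fin 2) (Fin n) ℝ} (hy : y ∈ TP 2 n u v) :
    (suppF 2 n y).card = n + #{j | 0 < y 0 j ∧ 0 < y 1 j} := by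
  have hcol : ∀ j, ((if 0 < y 0 j then 1 else 0) + if 0 < y 1 j then 1 else 0) =
      1 + if 0 < y 0 j ∧ 0 < y 1 j then 1 else 0 := by
    intro j
    have := add_eq_of_mem_TP hy zero_ne_one j
    have := hy.1 0 j
    have := hy.1 1 j
    have := hv j
    split_ifs <;> first | rfl | tauto | (exfalso; linarith)
  rw [suppF, card_filter, Fintype.sum_prod_type_right]
  simp only [Fin.sum_univ_two, hcol, sum_add_distrib, card_filter]
  simp

lemma exists_isSoleMixedDemand {u : Fin 2 → ℝ} {v : Fin n → ℝ} (hv : ∀ j, 0 < v j)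
    (hnd : NonDeg 2 n u v) {y : Matrix (Fin 2) (Fin n) ℝ}
    (hy : y ∈ (TP 2 n u v).extremePoints ℝ) : ∃ j₀, IsSoleMixedDemand y j₀ := by
  have hcard := card_suppF_eq hv hy.1
  rw [hnd y hy] at hcard
  obtain ⟨j₀, hj₀⟩ := card_eq_one.1 (by omega : #{j | 0 < y 0 j ∧ 0 < y 1 j} = 1)
  have hmem : ∀ j, 0 < y 0 j ∧ 0 < y 1 j ↔ j = j₀ := fun j => by
    simpa using congrArg (j ∈ ·) hj₀
  refine ⟨j₀, fun i => ?_, fun j hj => ?_⟩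
  · fin_cases i
    exacts [((hmem j₀).2 rfl).1, ((hmem j₀).2 rfl).2]
  · by_contra! h
    exact hj ((hmem j).1 ⟨(hy.1.1 0 j).lt_of_ne' (h 0), (hy.1.1 1 j).lt_of_ne' (h 1)⟩)

lemma eq_zero_of_margins_eq_zero {D : Matrix (Fin 2) (Fin n) ℝ} (hrow : ∀ i, ∑ j, D i j = 0)
    (hcol : ∀ j, ∑ i, D i j = 0) {j₀ : Fin n} (hleaf : ∀ j ≠ j₀, ∃ i, D i j = 0) : D = 0 := by
  have hoff : ∀ j ≠ j₀, ∀ i, D i j = 0 := by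
    intro j hj i
    obtain ⟨i', hi'⟩ := hleaf j hj
    rcases eq_or_ne i i' with rfl | hii'
    · exact hi'
    · linarith [Fin.sum_univ_two_of_ne hii' (D · j), hcol j]
  ext i j
  rcases eq_or_ne j j₀ with rfl | hj
  · rw [Matrix.zero_apply, ← hrow i, sum_eq_single j (fun k _ hk => hoff k hk i) (by simp)]
  · exact hoff j hj i

/-- `min (O b l) (O a j₀)` is the largest step along `pivotDir a b l j₀` keeping `O` nonnegative. -/
noncomputable def pivotStep (O : Matrix (Fin m) (Fin n) ℝ) (a b : Fin m) (l j₀ : Fin n) :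
    Matrix (Fin m) (Fin n) ℝ :=
  O + min (O b l) (O a j₀) • pivotDir a b l j₀

lemma ne_pivotStep {O : Matrix (Fin m) (Fin n) ℝ} {a b : Fin m} (hab : a ≠ b) {l j₀ : Fin n}
    (hal : O a l = 0) (hbl : 0 < O b l) (haj : 0 < O a j₀) : O ≠ pivotStep O a b l j₀ := by
  have hl : l ≠ j₀ := by rintro rfl; exact haj.ne' hal
  intro h
  have := congrFun (congrFun h a) l
  simp only [hal, pivotStep, Matrix.add_apply, Matrix.smul_apply, pivotDir_apply, ↓reduceIte, hab,
    sub_zero, hl, mul_one, smul_eq_mul, zero_add] at this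
  exact (lt_min hbl haj).ne this

lemma segment_pivotStep_eq {u : Fin 2 → ℝ} {v : Fin n → ℝ} {O : Matrix (Fin 2) (Fin n) ℝ}
    (hO : O ∈ TP 2 n u v) {j₀ : Fin n} (hOj : IsSoleMixedDemand O j₀) {a b : Fin 2}
    (hab : a ≠ b) {l : Fin n} (hal : O a l = 0) (hbl : 0 < O b l) :
    segment ℝ O (pivotStep O a b l j₀) = zeroFace u v {p | O p.1 p.2 = 0 ∧ p ≠ (a, l)} := by
  have hl : l ≠ j₀ := by rintro rfl; exact (hOj.1 a).ne' hal
  set θ := min (O b l) (O a j₀)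
  have hθ : 0 < θ := lt_min hbl (hOj.1 a)
  have hdir_al : pivotDir a b l j₀ a l = 1 := by simp [pivotDir_apply, hab, hl]
  have hdir_bl : pivotDir a b l j₀ b l = -1 := by simp [pivotDir_apply, hab.symm, hl]
  have hdir_aj : pivotDir a b l j₀ a j₀ = -1 := by simp [pivotDir_apply, hab, hl.symm]
  have hdir_off : ∀ i k, k ≠ l → k ≠ j₀ → pivotDir a b l j₀ i k = 0 := by
    intro i k hkl hk
    simp [pivotDir_apply, hkl, hk]
  apply le_antisymm
  · have hC : pivotStep O a b l j₀ ∈ TP 2 n u v :=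
      add_smul_pivotDir_mem_TP hO hθ.le (min_le_left _ _) (min_le_right _ _)
    refine (convex_zeroFace u v _).segment_subset ⟨hO, fun p hp => hp.1⟩
      ⟨hC, fun ⟨i, k⟩ ⟨hik, hne⟩ => ?_⟩
    have hk : k ≠ j₀ := by rintro rfl; exact (hOj.1 i).ne' hik
    have hkl : k ≠ l := by
      rintro rfl
      rcases Fin.two_eq_or_eq hab i with rfl | rfl
      exacts [hne rfl, hbl.ne' hik]
    simp [pivotStep, hik, hdir_off i k hkl hk]
  · rintro y ⟨hy, hyZ⟩
    set t := y a l
    have hyO : y = O + t • pivotDir a b l j₀ := by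
      rw [← sub_eq_zero]
      refine eq_zero_of_margins_eq_zero (j₀ := j₀) (fun i => ?_) (fun k => ?_) (fun k hk => ?_)
      · simp [sum_sub_distrib, sum_add_distrib, ← mul_sum, sum_pivotDir_row, hy.2.1, hO.2.1]
      · simp [sum_sub_distrib, sum_add_distrib, ← mul_sum, sum_pivotDir_col, hy.2.2, hO.2.2]
      · obtain ⟨i, hi⟩ := hOj.2 k hk
        rcases eq_or_ne k l with rfl | hkl
        · exact ⟨a, by simp [t, hal, hdir_al]⟩
        · refine ⟨i, ?_⟩
          simp [hi, hyZ (i, k) ⟨hi, fun h => hkl (congrArg Prod.snd h)⟩, hdir_off i k hkl hk]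
    have htθ : t ≤ θ := by
      have hbl' := congrFun (congrFun hyO b) l
      have haj' := congrFun (congrFun hyO a) j₀
      simp only [Matrix.add_apply, Matrix.smul_apply, smul_eq_mul, hdir_bl, hdir_aj] at hbl' haj'
      exact le_min (by linarith [hy.1 b l]) (by linarith [hy.1 a j₀])
    rw [segment_eq_image']
    refine ⟨t / θ, ⟨div_nonneg (hy.1 a l) hθ.le, (div_le_one hθ).2 htθ⟩, ?_⟩
    rw [hyO, pivotStep, add_sub_cancel_left]
    dsimp only
    rw [smul_smul]
    congr
    exact div_mul_cancel₀ t hθ.ne'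

lemma adjVert_of_segment_eq_zeroFace {u : Fin m → ℝ} {v : Fin n → ℝ}
    {O C : Matrix (Fin m) (Fin n) ℝ} (hO : O ∈ (TP m n u v).extremePoints ℝ) (hOC : O ≠ C)
    {Z : Set (Fin m × Fin n)} (h : segment ℝ O C = zeroFace u v Z) : AdjVert m n u v O C := by
  have hseg : IsExtreme ℝ (TP m n u v) (segment ℝ O C) := h ▸ isExtreme_zeroFace u v Z
  refine ⟨hOC, hO, ?_, hseg⟩
  exact isExtreme_singleton.1 (hseg.trans (isExtreme_singleton.2
    (right_mem_extremePoints_segment O C)))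

lemma eq_zero_of_forall_pos_imp_eq_zero {u : Fin 2 → ℝ} {v : Fin n → ℝ}
    {O F : Matrix (Fin 2) (Fin n) ℝ} (hO : O ∈ TP 2 n u v) (hF : F ∈ TP 2 n u v) {a b : Fin 2}
    (hab : a ≠ b) (h : ∀ j, 0 < F a j → O b j = 0) {j : Fin n} (hj : 0 < F a j) : F b j = 0 := by
  set A : Finset (Fin n) := {k | 0 < F a k}
  have hFA : ∑ k ∈ A, F a k = u a := by
    rw [← hF.2.1 a]
    exact sum_filter_of_ne fun k _ hk => (hF.1 a k).lt_of_ne' hk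
  have hOA : ∑ k ∈ A, O a k ≤ u a := by
    rw [← hO.2.1 a]
    exact sum_le_sum_of_subset_of_nonneg (subset_univ _) fun k _ _ => hO.1 a k
  have hOF : ∑ k ∈ A, O a k = ∑ k ∈ A, (F a k + F b k) := by
    refine sum_congr rfl fun k hk => ?_
    have := h k (mem_filter.1 hk).2
    linarith [add_eq_of_mem_TP hO hab k, add_eq_of_mem_TP hF hab k]
  have hsum : ∑ k ∈ A, F b k = 0 := by
    rw [sum_add_distrib, hFA] at hOF
    exact le_antisymm (by linarith) (sum_nonneg fun k _ => hF.1 b k)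
  exact (sum_eq_zero_iff_of_nonneg fun k _ => hF.1 b k).1 hsum j (by simp [A, hj])

lemma exists_nondecreasing_entering_of_le {u : Fin 2 → ℝ} {v : Fin n → ℝ}
    {s O F : Matrix (Fin 2) (Fin n) ℝ} (hO : O ∈ TP 2 n u v) (hF : F ∈ TP 2 n u v)
    {jO jF : Fin n} (hOj : IsSoleMixedDemand O jO) (hFj : IsSoleMixedDemand F jF) (hne : jO ≠ jF)
    (hopt : ∀ a b l, 0 < F b l → 0 < F a jF → s a l - s a jF - s b l + s b jF ≤ 0)
    {a b : Fin 2} (hab : a ≠ b) (hd : s a jO - s b jO ≤ s a jF - s b jF) :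
    ∃ a b l, a ≠ b ∧ O a l = 0 ∧ 0 < F a l ∧ 0 ≤ s a l - s a jO - s b l + s b jO := by
  by_cases hal : ∃ l, 0 < F a l ∧ O a l = 0
  · obtain ⟨l, hFl, hOl⟩ := hal
    refine ⟨a, b, l, hab, hOl, hFl, ?_⟩
    linarith [hopt b a l hFl (hFj.1 b)]
  simp only [not_exists, not_and] at hal
  have hFjO : 0 < F a jO := by
    by_contra! hFjO
    refine (hFj.1 b).ne' (eq_zero_of_forall_pos_imp_eq_zero hO hF hab (fun j hj => ?_) (hFj.1 a))
    have hjO : j ≠ jO := by rintro rfl; linarith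
    exact hOj.eq_zero_of_pos hjO hab ((hO.1 a j).lt_of_ne' (hal j hj))
  by_cases hbl : ∃ l, 0 < F b l ∧ O b l = 0
  · obtain ⟨l, hFl, hOl⟩ := hbl
    refine ⟨b, a, l, hab.symm, hOl, hFl, ?_⟩
    linarith [hopt b a jO hFjO (hFj.1 b), hopt a b l hFl (hFj.1 a)]
  simp only [not_exists, not_and] at hbl
  have hOajF : 0 < O a jF := (hO.1 a jF).lt_of_ne' (hal jF (hFj.1 a))
  exact (hbl jF (hFj.1 b) (hOj.eq_zero_of_pos hne.symm hab hOajF)).elim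

lemma exists_nondecreasing_entering {u : Fin 2 → ℝ} {v : Fin n → ℝ}
    {s O F : Matrix (Fin 2) (Fin n) ℝ} (hO : O ∈ TP 2 n u v) (hF : F ∈ TP 2 n u v)
    {jO jF : Fin n} (hOj : IsSoleMixedDemand O jO) (hFj : IsSoleMixedDemand F jF) (hne : jO ≠ jF)
    (hopt : ∀ a b l, 0 < F b l → 0 < F a jF → s a l - s a jF - s b l + s b jF ≤ 0) :
    ∃ a b l, a ≠ b ∧ O a l = 0 ∧ 0 < F a l ∧ 0 ≤ s a l - s a jO - s b l + s b jO := by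
  rcases le_total (s 0 jO - s 1 jO) (s 0 jF - s 1 jF) with hd | hd
  · exact exists_nondecreasing_entering_of_le hO hF hOj hFj hne hopt zero_ne_one hd
  · exact exists_nondecreasing_entering_of_le hO hF hOj hFj hne hopt one_ne_zero (by linarith)

theorem stmt_14_general (n : ℕ) (u : Fin 2 → ℝ) (v : Fin n → ℝ)
    (hv : ∀ j, 0 < v j)
    (hnd : NonDeg 2 n u v)
    (s : Matrix (Fin 2) (Fin n) ℝ)
    (F : Matrix (Fin 2) (Fin n) ℝ)
    (hFv : F ∈ Set.extremePoints ℝ (TP 2 n u v))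
    (hFmax : ∀ y ∈ TP 2 n u v, ∑ i, ∑ l, s i l * y i l ≤ ∑ i, ∑ l, s i l * F i l)
    (O : Matrix (Fin 2) (Fin n) ℝ)
    (hOv : O ∈ Set.extremePoints ℝ (TP 2 n u v))
    (hmix : MixedDemands n O ≠ MixedDemands n F) :
    ∃ C : Matrix (Fin 2) (Fin n) ℝ, AdjVert 2 n u v O C ∧
      suppS 2 n C \ suppS 2 n O ⊆ suppS 2 n F ∧
      ∑ i, ∑ l, s i l * O i l ≤ ∑ i, ∑ l, s i l * C i l := by
  obtain ⟨jO, hOj⟩ := exists_isSoleMixedDemand hv hnd hOv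
  obtain ⟨jF, hFj⟩ := exists_isSoleMixedDemand hv hnd hFv
  have hne : jO ≠ jF := by
    rintro rfl
    exact hmix (hOj.mixedDemands_eq.trans hFj.mixedDemands_eq.symm)
  obtain ⟨a, b, l, hab, hal, hFal, hgain⟩ :=
    exists_nondecreasing_entering (s := s) hOv.1 hFv.1 hOj hFj hne
      fun _ _ _ hbl haj => pivot_gain_nonpos_of_max hFv.1 hFmax hbl haj
  have hbl : 0 < O b l := by linarith [add_eq_of_mem_TP hOv.1 hab l, hv l]
  have hseg := segment_pivotStep_eq hOv.1 hOj hab hal hbl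
  have hC : pivotStep O a b l jO ∈ zeroFace u v _ := hseg ▸ right_mem_segment ℝ O _
  refine ⟨_, adjVert_of_segment_eq_zeroFace hOv (ne_pivotStep hab hal hbl (hOj.1 a)) hseg, ?_, ?_⟩
  · rintro ⟨i, k⟩ ⟨hCik, hOik⟩
    by_contra hik
    refine hCik.ne' (hC.2 (i, k) ⟨(hOv.1.1 i k).antisymm' (not_lt.1 hOik), ?_⟩)
    rintro ⟨⟩
    exact hik hFal
  · rw [pivotStep, sum_mul_add_smul, sum_mul_pivotDir]
    have := mul_nonneg (le_min hbl.le (hOj.1 a).le) hgain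
    linarith

/-- if O and the s-maximal vertex F have different mixed demands, then
there is a non-decreasing pivot from O inserting only edges of supp(F). -/
theorem stmt_14 (n : ℕ) (hn : 0 < n) (u : Fin 2 → ℝ) (v : Fin n → ℝ)
    (hu : ∀ i, 0 < u i) (hv : ∀ j, 0 < v j) (huv : ∑ i, u i = ∑ j, v j)
    (hnd : NonDeg 2 n u v)
    (s : Matrix (Fin 2) (Fin n) ℝ)
    (hs : ∀ (i : Fin n) (h : (i : ℕ) + 1 < n),
      s 0 ⟨(i : ℕ) + 1, h⟩ - s 1 ⟨(i : ℕ) + 1, h⟩ ≤ s 0 i - s 1 i)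
    (F : Matrix (Fin 2) (Fin n) ℝ)
    (hFv : F ∈ Set.extremePoints ℝ (TP 2 n u v))
    (hFmax : ∀ y ∈ TP 2 n u v, ∑ i, ∑ l, s i l * y i l ≤ ∑ i, ∑ l, s i l * F i l)
    (O : Matrix (Fin 2) (Fin n) ℝ)
    (hOv : O ∈ Set.extremePoints ℝ (TP 2 n u v))
    (hmix : MixedDemands n O ≠ MixedDemands n F) :
    ∃ C : Matrix (Fin 2) (Fin n) ℝ, AdjVert 2 n u v O C ∧
      suppS 2 n C \ suppS 2 n O ⊆ suppS 2 n F ∧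
      ∑ i, ∑ l, s i l * O i l ≤ ∑ i, ∑ l, s i l * C i l :=
  stmt_14_general n u v hv hnd s F hFv hFmax O hOv hmix
end

section
/- The monotone Hirsch conjecture holds for 2×n transportation polytopes with bound n: for every 2×n transportation polytope P(u,v) with positive margins, every cost matrix s ∈ ℝ^{2×n}, and every vertex O of P(u,v), there exist a vertex F of P(u,v) maximizing y ↦ ∑_{i,j} s_{ij} y_{ij} over P(u,v) and an edge walk O = y⁰, y¹, …, y^k = F with k ≤ n such that the values ∑_{i,j} s_{ij} y^l_{ij} are non-decreasing in l. -/
open Set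

section ConvexGeometry

variable {E F : Type*} [AddCommGroup E] [Module ℝ E] [AddCommGroup F] [Module ℝ F]

def AreAdjacent (S : Set E) (y z : E) : Prop :=
  y ≠ z ∧ y ∈ S.extremePoints ℝ ∧ z ∈ S.extremePoints ℝ ∧ IsExtreme ℝ S (segment ℝ y z)

def IsMonotoneWalk (S : Set E) (g : E → ℝ) (w : ℕ → E) (k : ℕ) : Prop :=
  ∀ l < k, AreAdjacent S (w l) (w (l + 1)) ∧ g (w l) ≤ g (w (l + 1))

namespace AffineMap

variable (φ : E →ᵃ[ℝ] F) (hφ : Function.Injective φ)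
include hφ

theorem isExtreme_image {s t : Set E} (h : IsExtreme ℝ s t) : IsExtreme ℝ (φ '' s) (φ '' t) := by
  refine ⟨image_mono h.subset, ?_⟩
  rintro _ ⟨a, ha, rfl⟩ _ ⟨b, hb, rfl⟩ _ ⟨c, hc, rfl⟩ hseg
  rw [← image_openSegment] at hseg
  obtain ⟨d, hd, hdc⟩ := hseg
  exact mem_image_of_mem φ (h.left_mem_of_mem_openSegment ha hb hc (hφ hdc ▸ hd))

theorem mem_extremePoints_image_iff {s : Set E} {x : E} :
    φ x ∈ (φ '' s).extremePoints ℝ ↔ x ∈ s.extremePoints ℝ := by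
  refine ⟨fun h => ⟨hφ.mem_set_image.1 h.1, fun a ha b hb hx => ?_⟩, fun h => ?_⟩
  · exact hφ (h.2 (mem_image_of_mem φ ha) (mem_image_of_mem φ hb)
      (image_openSegment ℝ φ a b ▸ mem_image_of_mem φ hx))
  · simpa using isExtreme_image φ hφ (isExtreme_singleton.2 h)

theorem areAdjacent_image {s : Set E} {y z : E} (h : AreAdjacent s y z) :
    AreAdjacent (φ '' s) (φ y) (φ z) := by
  obtain ⟨hyz, hy, hz, hseg⟩ := h
  refine ⟨hφ.ne hyz, (mem_extremePoints_image_iff φ hφ).2 hy,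
    (mem_extremePoints_image_iff φ hφ).2 hz, ?_⟩
  simpa [image_segment] using isExtreme_image φ hφ hseg

theorem isMonotoneWalk_image {s : Set E} {g : E → ℝ} {g' : F → ℝ}
    (hg : ∀ a b, g a ≤ g b → g' (φ a) ≤ g' (φ b)) {w : ℕ → E} {k : ℕ}
    (h : IsMonotoneWalk s g w k) : IsMonotoneWalk (φ '' s) g' (φ ∘ w) k :=
  fun l hl => ⟨areAdjacent_image φ hφ (h l hl).1, hg _ _ (h l hl).2⟩

end AffineMap

theorem IsMonotoneWalk.cons {S : Set E} {g : E → ℝ} {x : E} {w : ℕ → E} {k : ℕ}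
    (hx : AreAdjacent S x (w 0)) (hg : g x ≤ g (w 0)) (h : IsMonotoneWalk S g w k) :
    IsMonotoneWalk S g (fun | 0 => x | l + 1 => w l) (k + 1)
  | 0, _ => ⟨hx, hg⟩
  | l + 1, hl => h l (by omega)

theorem exists_monotoneWalk_of_descent {S : Set E} {g : E → ℝ} (μ : E → ℕ) {f : E}
    (hstep : ∀ x ∈ S.extremePoints ℝ, x ≠ f →
      ∃ y, AreAdjacent S x y ∧ g x ≤ g y ∧ μ y < μ x)
    {x : E} (hx : x ∈ S.extremePoints ℝ) :
    ∃ k ≤ μ x, ∃ w : ℕ → E, w 0 = x ∧ w k = f ∧ IsMonotoneWalk S g w k := by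
  induction hm : μ x using Nat.strong_induction_on generalizing x with
  | _ m ih =>
  by_cases hxf : x = f
  · exact ⟨0, Nat.zero_le _, fun _ => x, rfl, hxf, fun l hl => absurd hl (Nat.not_lt_zero l)⟩
  obtain ⟨y, hxy, hg, hμ⟩ := hstep x hx hxf
  obtain ⟨k, hk, w, hw0, hwk, hw⟩ := ih _ (hm ▸ hμ) hxy.2.2.1 rfl
  exact ⟨k + 1, by omega, _, rfl, hwk, hw.cons (hw0 ▸ hxy) (hw0 ▸ hg)⟩

theorem IsCompact.exists_mem_extremePoints_isMaxOn [TopologicalSpace E] [T2Space E]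
    [IsTopologicalAddGroup E] [ContinuousSMul ℝ E] [LocallyConvexSpace ℝ E] {s : Set E}
    (hs : IsCompact s) (hne : s.Nonempty) (l : E →L[ℝ] ℝ) :
    ∃ x ∈ s.extremePoints ℝ, IsMaxOn l s x := by
  obtain ⟨z, hz, hzmax⟩ := hs.exists_isMaxOn hne l.continuous.continuousOn
  have hexp : IsExposed ℝ s {y ∈ s | ∀ w ∈ s, l w ≤ l y} := fun _ => ⟨l, rfl⟩
  obtain ⟨x, hx⟩ := (hexp.isCompact hs).extremePoints_nonempty ⟨z, hz, hzmax⟩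
  exact ⟨x, hexp.isExtreme.extremePoints_subset_extremePoints hx, hx.1.2⟩

end ConvexGeometry

def boxSlice {n : ℕ} (v : Fin n → ℝ) (σ : ℝ) : Set (Fin n → ℝ) :=
  {x | (∀ j, x j ∈ Icc 0 (v j)) ∧ ∑ j, x j = σ}

def fracCoords {n : ℕ} (v x : Fin n → ℝ) : Set (Fin n) :=
  {j | x j ∈ Ioo 0 (v j)}

namespace BoxSlice

variable {n : ℕ} {v x y z : Fin n → ℝ} {σ : ℝ}

theorem boxSlice_eq_Icc_inter : boxSlice v σ = Icc 0 v ∩ {x | ∑ j, x j = σ} := by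
  ext x; simp [boxSlice, Pi.le_def, forall_and]

theorem convex_boxSlice : Convex ℝ (boxSlice v σ) := by
  rw [boxSlice_eq_Icc_inter]
  exact (convex_Icc 0 v).inter (convex_hyperplane ⟨fun x y => by simp [Finset.sum_add_distrib],
    fun c x => by simp [Finset.mul_sum]⟩ σ)

theorem isCompact_boxSlice : IsCompact (boxSlice v σ) := by
  rw [boxSlice_eq_Icc_inter]
  exact isCompact_Icc.inter_right (isClosed_eq (by fun_prop) continuous_const)

theorem not_mem_fracCoords_iff (hx : x ∈ boxSlice v σ) {j : Fin n} :
    j ∉ fracCoords v x ↔ x j = 0 ∨ x j = v j := by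
  obtain ⟨h0, h1⟩ := hx.1 j
  simp only [fracCoords, mem_ofPred_eq, mem_Ioo, not_and_or, not_lt]
  constructor
  · rintro (h | h)
    · exact Or.inl (le_antisymm h h0)
    · exact Or.inr (le_antisymm h1 h)
  · rintro (h | h)
    · exact Or.inl h.le
    · exact Or.inr h.ge

theorem sum_sub_eq_zero (hx : x ∈ boxSlice v σ) (hz : z ∈ boxSlice v σ) :
    ∑ j, (z j - x j) = 0 := by
  rw [Finset.sum_sub_distrib, hx.2, hz.2, sub_self]

theorem eq_of_eqOn_compl_subsingleton (hx : x ∈ boxSlice v σ) (hz : z ∈ boxSlice v σ)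
    {T : Set (Fin n)} (hT : T.Subsingleton) (h : ∀ j ∉ T, z j = x j) : z = x := by
  funext j
  by_cases hj : j ∈ T
  · have := sum_sub_eq_zero hx hz
    rw [Fintype.sum_eq_single j fun i hi => by rw [h i fun hiT => hi (hT hiT hj), sub_self]]
      at this
    linarith
  · exact h j hj

theorem add_eq_add_of_eqOn_compl_pair (hx : x ∈ boxSlice v σ) (hz : z ∈ boxSlice v σ)
    {a b : Fin n} (hab : a ≠ b) (h : ∀ j ∉ ({a, b} : Set (Fin n)), z j = x j) :
    z a + z b = x a + x b := by
  have := sum_sub_eq_zero hx hz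
  rw [Fintype.sum_eq_add a b hab fun i hi => by rw [h i (by simp [hi.1, hi.2]), sub_self]]
    at this
  linarith

theorem isExtreme_boxSlice_face (hx : x ∈ boxSlice v σ) {T : Set (Fin n)}
    (hT : fracCoords v x ⊆ T) :
    IsExtreme ℝ (boxSlice v σ) {z ∈ boxSlice v σ | ∀ j ∉ T, z j = x j} := by
  refine ⟨sep_subset _ _, fun z₁ hz₁ z₂ hz₂ z hz hseg => ⟨hz₁, fun j hj => ?_⟩⟩
  have hv : 0 ≤ v j := (hx.1 j).1.trans (hx.1 j).2
  have hxj : x j ∈ extremePoints ℝ (Icc 0 (v j)) := by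
    rw [extremePoints_Icc hv]
    exact (not_mem_fracCoords_iff hx).1 fun h => hj (hT h)
  obtain ⟨α, β, hα, hβ, hαβ, rfl⟩ := hseg
  rw [← hz.2 j hj]
  rw [← hz.2 j hj] at hxj
  exact hxj.2 (hz₁.1 j) (hz₂.1 j) ⟨α, β, hα, hβ, hαβ, by simp⟩

def transfer (x : Fin n → ℝ) (a b : Fin n) (t : ℝ) : Fin n → ℝ :=
  x + Pi.single a t - Pi.single b t

section transfer

variable {a b : Fin n} {t : ℝ}

theorem transfer_apply_left (hab : a ≠ b) : transfer x a b t a = x a + t := by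
  simp [transfer, hab]

theorem transfer_apply_right (hab : a ≠ b) : transfer x a b t b = x b - t := by
  simp [transfer, hab.symm]

theorem transfer_apply_of_ne {j : Fin n} (ha : j ≠ a) (hb : j ≠ b) :
    transfer x a b t j = x j := by
  simp [transfer, ha, hb]

theorem transfer_eqOn_compl_pair : ∀ j ∉ ({a, b} : Set (Fin n)), transfer x a b t j = x j :=
  fun _ hj => transfer_apply_of_ne (by simp_all) (by simp_all)

theorem transfer_mem_boxSlice (hx : x ∈ boxSlice v σ) (hab : a ≠ b) (ht : 0 ≤ t)
    (ha : x a + t ≤ v a) (hb : t ≤ x b) : transfer x a b t ∈ boxSlice v σ := by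
  refine ⟨fun j => ?_, ?_⟩
  · obtain ⟨h0, h1⟩ := hx.1 j
    by_cases hja : j = a
    · subst hja; rw [transfer_apply_left hab]; constructor <;> linarith
    by_cases hjb : j = b
    · subst hjb; rw [transfer_apply_right hab]; constructor <;> linarith
    rw [transfer_apply_of_ne hja hjb]; exact ⟨h0, h1⟩
  · simp [transfer, Finset.sum_add_distrib, Finset.sum_sub_distrib, hx.2]

theorem dotProduct_transfer (c : Fin n → ℝ) :
    c ⬝ᵥ transfer x a b t = c ⬝ᵥ x + t * (c a - c b) := by
  simp only [transfer, dotProduct_sub, dotProduct_add, dotProduct_single]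
  ring

end transfer

theorem mem_extremePoints_boxSlice_iff :
    x ∈ (boxSlice v σ).extremePoints ℝ ↔ x ∈ boxSlice v σ ∧ (fracCoords v x).Subsingleton := by
  refine ⟨fun h => ⟨h.1, fun j hj k hk => ?_⟩, fun ⟨hx, hsub⟩ => ?_⟩
  · by_contra hjk
    set ε := min (min (x j) (v j - x j)) (min (x k) (v k - x k))
    have hε : 0 < ε := lt_min (lt_min hj.1 (sub_pos.2 hj.2)) (lt_min hk.1 (sub_pos.2 hk.2))
    have h1 : ε ≤ x j := (min_le_left _ _).trans (min_le_left _ _)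
    have h2 : ε ≤ v j - x j := (min_le_left _ _).trans (min_le_right _ _)
    have h3 : ε ≤ x k := (min_le_right _ _).trans (min_le_left _ _)
    have h4 : ε ≤ v k - x k := (min_le_right _ _).trans (min_le_right _ _)
    have hmid : x ∈ openSegment ℝ (transfer x j k ε) (transfer x k j ε) :=
      ⟨1 / 2, 1 / 2, by norm_num, by norm_num, by norm_num, by
        ext i; simp only [transfer, Pi.add_apply, Pi.sub_apply, Pi.smul_apply, smul_eq_mul]; ring⟩
    have := congrFun (h.2 (transfer_mem_boxSlice h.1 hjk hε.le (by linarith) h3)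
      (transfer_mem_boxSlice h.1 (Ne.symm hjk) hε.le (by linarith) h1) hmid) j
    rw [transfer_apply_left hjk] at this
    linarith
  · have hface : {z ∈ boxSlice v σ | ∀ j ∉ fracCoords v x, z j = x j} = {x} :=
      eq_singleton_iff_unique_mem.2 ⟨⟨hx, fun _ _ => rfl⟩,
        fun z hz => eq_of_eqOn_compl_subsingleton hx hz.1 hsub hz.2⟩
    rw [← isExtreme_singleton, ← hface]
    exact isExtreme_boxSlice_face hx subset_rfl

theorem mem_segment_of_eqOn_compl_pair (hx : x ∈ boxSlice v σ) (hy : y ∈ boxSlice v σ)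
    (hz : z ∈ boxSlice v σ) {a b : Fin n} (hab : a ≠ b) (hxv : (fracCoords v x).Subsingleton)
    (hyv : (fracCoords v y).Subsingleton) (hyx : ∀ j ∉ ({a, b} : Set (Fin n)), y j = x j)
    (hzx : ∀ j ∉ ({a, b} : Set (Fin n)), z j = x j) (hlt : x a < y a) :
    z ∈ segment ℝ x y := by
  have hy2 := add_eq_add_of_eqOn_compl_pair hx hy hab hyx
  have hz2 := add_eq_add_of_eqOn_compl_pair hx hz hab hzx
  obtain ⟨⟨hya0, hya1⟩, ⟨hyb0, hyb1⟩⟩ := And.intro (hy.1 a) (hy.1 b)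
  obtain ⟨⟨hza0, hza1⟩, ⟨hzb0, hzb1⟩⟩ := And.intro (hz.1 a) (hz.1 b)
  have hx0 := (hx.1 a).1
  have lower : x a ≤ z a := by
    have : a ∉ fracCoords v x ∨ b ∉ fracCoords v x := by
      by_contra! h; exact hab (hxv h.1 h.2)
    rcases this with h | h <;> rcases (not_mem_fracCoords_iff hx).1 h with h' | h' <;> linarith
  have upper : z a ≤ y a := by
    have : a ∉ fracCoords v y ∨ b ∉ fracCoords v y := by
      by_contra! h; exact hab (hyv h.1 h.2)
    rcases this with h | h <;> rcases (not_mem_fracCoords_iff hy).1 h with h' | h' <;>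
      linarith [(hx.1 b).2]
  have hd : y a - x a ≠ 0 := (sub_pos.2 hlt).ne'
  rw [segment_eq_image']
  refine ⟨(z a - x a) / (y a - x a), ⟨div_nonneg (by linarith) (by linarith),
    (div_le_one (by linarith)).2 (by linarith)⟩, funext fun j => ?_⟩
  simp only [Pi.add_apply, Pi.smul_apply, Pi.sub_apply, smul_eq_mul]
  by_cases hja : j = a
  · subst hja; field_simp; ring
  by_cases hjb : j = b
  · subst hjb
    rw [show y j - x j = -(y a - x a) by linarith, show z j = x j - (z a - x a) by linarith]
    field_simp; ring
  have hj : j ∉ ({a, b} : Set (Fin n)) := by simp [hja, hjb]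
  rw [hyx j hj, hzx j hj]; ring

/-- The face fixing the coordinates off `{a, b}` is exactly the segment. -/
theorem isExtreme_segment_boxSlice (hx : x ∈ (boxSlice v σ).extremePoints ℝ)
    (hy : y ∈ (boxSlice v σ).extremePoints ℝ) (hxy : x ≠ y) {a b : Fin n} (hab : a ≠ b)
    (hfrac : fracCoords v x ⊆ {a, b}) (hyx : ∀ j ∉ ({a, b} : Set (Fin n)), y j = x j) :
    IsExtreme ℝ (boxSlice v σ) (segment ℝ x y) := by
  rw [mem_extremePoints_boxSlice_iff] at hx hy
  suffices h : {z ∈ boxSlice v σ | ∀ j ∉ ({a, b} : Set (Fin n)), z j = x j} = segment ℝ x y by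
    rw [← h]; exact isExtreme_boxSlice_face hx.1 hfrac
  refine Subset.antisymm (fun z ⟨hz, hzx⟩ => ?_) fun z hz => ⟨convex_boxSlice.segment_subset
    hx.1 hy.1 hz, fun j hj => ?_⟩
  · rcases lt_trichotomy (x a) (y a) with h | h | h
    · exact mem_segment_of_eqOn_compl_pair hx.1 hy.1 hz hab hx.2 hy.2 hyx hzx h
    · refine absurd (eq_of_eqOn_compl_subsingleton hx.1 hy.1 (subsingleton_singleton (a := b))
        fun j hj => ?_).symm hxy
      by_cases hja : j = a
      · exact hja ▸ h.symm
      · exact hyx j (by simp_all)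
    · rw [segment_symm]
      exact mem_segment_of_eqOn_compl_pair hy.1 hx.1 hz hab hy.2 hx.2
        (fun j hj => (hyx j hj).symm) (fun j hj => (hzx j hj).trans (hyx j hj).symm) h
  · obtain ⟨α, β, -, -, hαβ, rfl⟩ := hz
    simp [hyx j hj, ← add_mul, hαβ]

def pivot (v x : Fin n → ℝ) (a b : Fin n) : Fin n → ℝ :=
  transfer x a b (min (v a - x a) (x b))

section pivot

variable {a b : Fin n}

theorem pivot_mem_boxSlice (hx : x ∈ boxSlice v σ) (hab : a ≠ b) :
    pivot v x a b ∈ boxSlice v σ :=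
  transfer_mem_boxSlice hx hab (le_min (sub_nonneg.2 (hx.1 a).2) (hx.1 b).1)
    (by linarith [min_le_left (v a - x a) (x b)]) (min_le_right _ _)

theorem pivot_apply_left_eq_or_apply_right_eq (hab : a ≠ b) :
    pivot v x a b a = v a ∨ pivot v x a b b = 0 := by
  simp only [pivot, transfer_apply_left hab, transfer_apply_right hab]
  rcases min_choice (v a - x a) (x b) with h | h <;> rw [h] <;> simp

theorem fracCoords_pivot_subset (hfrac : fracCoords v x ⊆ {a, b}) :
    fracCoords v (pivot v x a b) ⊆ {a, b} := by
  intro j hj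
  by_contra hj'
  have : pivot v x a b j = x j := transfer_eqOn_compl_pair j hj'
  exact hj' (hfrac (show x j ∈ Ioo 0 (v j) from this ▸ hj))

theorem fracCoords_pivot_subsingleton (hx : x ∈ boxSlice v σ) (hab : a ≠ b)
    (hfrac : fracCoords v x ⊆ {a, b}) : (fracCoords v (pivot v x a b)).Subsingleton := by
  have hsub := fracCoords_pivot_subset hfrac
  have hy := pivot_mem_boxSlice hx hab
  rcases pivot_apply_left_eq_or_apply_right_eq (x := x) hab with h | h
  · have ha := (not_mem_fracCoords_iff hy).2 (Or.inr h)
    exact subsingleton_singleton.anti fun j hj =>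
      (hsub hj).resolve_left (by rintro rfl; exact ha hj)
  · have hb := (not_mem_fracCoords_iff hy).2 (Or.inl h)
    exact subsingleton_singleton.anti fun j hj =>
      (hsub hj).resolve_right (by rintro rfl; exact hb hj)

theorem areAdjacent_pivot (hx : x ∈ (boxSlice v σ).extremePoints ℝ) (hab : a ≠ b)
    (ha : x a < v a) (hb : 0 < x b) (hfrac : fracCoords v x ⊆ {a, b}) :
    AreAdjacent (boxSlice v σ) x (pivot v x a b) := by
  have hy : pivot v x a b ∈ (boxSlice v σ).extremePoints ℝ :=
    mem_extremePoints_boxSlice_iff.2 ⟨pivot_mem_boxSlice hx.1 hab,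
      fracCoords_pivot_subsingleton hx.1 hab hfrac⟩
  have hxy : x ≠ pivot v x a b := fun h => by
    have := congrFun h a
    rw [pivot, transfer_apply_left hab] at this
    linarith [lt_min (sub_pos.2 ha) hb]
  exact ⟨hxy, hx, hy, isExtreme_segment_boxSlice hx hy hxy hab hfrac transfer_eqOn_compl_pair⟩

theorem dotProduct_le_dotProduct_pivot (hx : x ∈ boxSlice v σ) {c : Fin n → ℝ}
    (hc : c b ≤ c a) : c ⬝ᵥ x ≤ c ⬝ᵥ pivot v x a b := by
  rw [pivot, dotProduct_transfer]
  have := le_min (sub_nonneg.2 (hx.1 a).2) (hx.1 b).1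
  nlinarith

/-- At a maximizer nothing can be gained by moving mass from `b` to `a`. -/
theorem le_of_isMaxOn_dotProduct {f c : Fin n → ℝ} (hf : f ∈ boxSlice v σ)
    (hopt : IsMaxOn (c ⬝ᵥ ·) (boxSlice v σ) f) (ha : f a < v a) (hb : 0 < f b) :
    c a ≤ c b := by
  rcases eq_or_ne a b with rfl | hab
  · rfl
  have h := hopt (pivot_mem_boxSlice hf hab)
  simp only [mem_ofPred_eq, pivot, dotProduct_transfer] at h
  nlinarith [lt_min (sub_pos.2 ha) hb]

end pivot

theorem exists_lt_of_ne {f : Fin n → ℝ} (hx : x ∈ boxSlice v σ) (hf : f ∈ boxSlice v σ)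
    (hxf : x ≠ f) : ∃ j, x j < f j := by
  by_contra! hle
  exact hxf (funext fun j => ((Finset.sum_eq_sum_iff_of_le fun i _ => hle i).1
    (hf.2.trans hx.2.symm) j (Finset.mem_univ j)).symm)

theorem sub_le_sub_of_forall_ne_le {f : Fin n → ℝ} (hx : x ∈ boxSlice v σ)
    (hf : f ∈ boxSlice v σ) {p b : Fin n} (hge : ∀ j ≠ p, f j ≤ x j) (hbp : b ≠ p) :
    x b - f b ≤ f p - x p := by
  have hsum := sum_sub_eq_zero hf hx
  rw [← Finset.add_sum_erase _ _ (Finset.mem_univ p)] at hsum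
  have := Finset.single_le_sum (f := fun j => x j - f j)
    (fun j hj => sub_nonneg.2 (hge j (Finset.ne_of_mem_erase hj)))
    (Finset.mem_erase.2 ⟨hbp, Finset.mem_univ b⟩)
  linarith

section walkBound

variable (v : Fin n → ℝ) (f x : Fin n → ℝ)

def mismatch : Set (Fin n) :=
  {j | j ∉ fracCoords v f ∧ x j ≠ f j}

def Underfull (a : Fin n) : Prop :=
  a ∉ fracCoords v f ∧ x a < f a

def Overfull (b : Fin n) : Prop :=
  b ∉ fracCoords v f ∧ f b < x b

def NeedsDetour : Prop :=
  (∃ a, Underfull v f x a) ∧ (∃ b, Overfull v f x b) ∧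
    (fracCoords v x ∩ fracCoords v f).Nonempty

open Classical in
noncomputable def walkBound : ℕ :=
  (mismatch v f x).ncard + if NeedsDetour v f x then 1 else 0

variable {v f x}

theorem walkBound_le : walkBound v f x ≤ n := by
  unfold walkBound
  split_ifs with hd
  · obtain ⟨-, -, p, -, hp⟩ := hd
    have := ncard_lt_ncard (s := mismatch v f x) ⟨subset_univ _, fun h => (h (mem_univ p)).1 hp⟩
    simp only [ncard_univ, Nat.card_eq_fintype_card, Fintype.card_fin] at this
    omega
  · simpa using ncard_le_ncard (subset_univ (mismatch v f x))

theorem Underfull.mem_mismatch {a : Fin n} (h : Underfull v f x a) : a ∈ mismatch v f x :=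
  ⟨h.1, h.2.ne⟩

theorem Overfull.mem_mismatch {b : Fin n} (h : Overfull v f x b) : b ∈ mismatch v f x :=
  ⟨h.1, h.2.ne'⟩

theorem Underfull.eq {a : Fin n} (h : Underfull v f x a) (hf : f ∈ boxSlice v σ)
    (hx : x ∈ boxSlice v σ) : f a = v a :=
  ((not_mem_fracCoords_iff hf).1 h.1).resolve_left (by linarith [(hx.1 a).1, h.2])

theorem Overfull.eq {b : Fin n} (h : Overfull v f x b) (hf : f ∈ boxSlice v σ)
    (hx : x ∈ boxSlice v σ) : f b = 0 :=
  ((not_mem_fracCoords_iff hf).1 h.1).resolve_right (by linarith [(hx.1 b).2, h.2])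

theorem mismatch_subset {a b : Fin n} (hyx : ∀ j ∉ ({a, b} : Set (Fin n)), y j = x j)
    (ha : a ∈ fracCoords v f ∨ a ∈ mismatch v f x)
    (hb : b ∈ fracCoords v f ∨ b ∈ mismatch v f x) : mismatch v f y ⊆ mismatch v f x := by
  intro j hj
  by_cases hjab : j ∈ ({a, b} : Set (Fin n))
  · rcases hjab with rfl | rfl
    · exact ha.resolve_left hj.1
    · exact hb.resolve_left hj.1
  · exact ⟨hj.1, hyx j hjab ▸ hj.2⟩

theorem ncard_mismatch_lt (hsub : mismatch v f y ⊆ mismatch v f x) {j : Fin n}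
    (hj : j ∈ mismatch v f x) (hyj : y j = f j) :
    (mismatch v f y).ncard < (mismatch v f x).ncard :=
  ncard_lt_ncard ⟨hsub, fun h => (h hj).2 hyj⟩

theorem walkBound_eq_of_not_needsDetour (h : ¬NeedsDetour v f x) :
    walkBound v f x = (mismatch v f x).ncard := by
  simp [walkBound, h]

theorem ncard_mismatch_le_walkBound : (mismatch v f x).ncard ≤ walkBound v f x :=
  Nat.le_add_right _ _

theorem walkBound_le_ncard_mismatch_add_one : walkBound v f x ≤ (mismatch v f x).ncard + 1 := by
  unfold walkBound; split_ifs <;> omega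

end walkBound

section reflection

def reflect (v : Fin n → ℝ) : (Fin n → ℝ) →ᵃ[ℝ] (Fin n → ℝ) where
  toFun x := v - x
  linear := -LinearMap.id
  map_vadd' x y := by simp only [vadd_eq_add, LinearMap.neg_apply, LinearMap.id_apply]; abel

@[simp]
theorem reflect_apply : reflect v x = v - x := rfl

theorem reflect_injective : Function.Injective (reflect v) :=
  fun _ _ h => sub_right_injective h

theorem image_reflect_boxSlice : reflect v '' boxSlice v σ = boxSlice v (∑ j, v j - σ) := by
  ext y
  constructor
  · rintro ⟨x, hx, rfl⟩
    refine ⟨fun j => ?_, by simp [Finset.sum_sub_distrib, hx.2]⟩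
    obtain ⟨h0, h1⟩ := hx.1 j
    simp only [reflect_apply, Pi.sub_apply, mem_Icc]
    constructor <;> linarith
  · intro hy
    refine ⟨v - y, ⟨fun j => ?_, ?_⟩, sub_sub_cancel v y⟩
    · obtain ⟨h0, h1⟩ := hy.1 j
      simp only [Pi.sub_apply, mem_Icc]
      constructor <;> linarith
    · simp [Finset.sum_sub_distrib, hy.2]

theorem fracCoords_sub : fracCoords v (v - x) = fracCoords v x := by
  ext j
  simp only [fracCoords, mem_ofPred_eq, Pi.sub_apply, mem_Ioo]
  constructor <;> rintro ⟨h0, h1⟩ <;> constructor <;> linarith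

variable {f : Fin n → ℝ}

theorem underfull_sub {a : Fin n} : Underfull v (v - f) (v - x) a ↔ Overfull v f x a := by
  simp [Underfull, Overfull, fracCoords_sub]

theorem overfull_sub {b : Fin n} : Overfull v (v - f) (v - x) b ↔ Underfull v f x b := by
  simp [Underfull, Overfull, fracCoords_sub]

theorem walkBound_sub : walkBound v (v - f) (v - x) = walkBound v f x := by
  have hm : mismatch v (v - f) (v - x) = mismatch v f x := by
    ext j; simp [mismatch, fracCoords_sub]
  have hd : NeedsDetour v (v - f) (v - x) ↔ NeedsDetour v f x := by
    simp only [NeedsDetour, underfull_sub, overfull_sub, fracCoords_sub]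
    tauto
  by_cases h : NeedsDetour v f x <;> simp [walkBound, hm, hd, h]

end reflection

section steps

variable {f c : Fin n → ℝ}

theorem exists_step_of_underfull_of_overfull (hf : f ∈ boxSlice v σ)
    (hopt : IsMaxOn (c ⬝ᵥ ·) (boxSlice v σ) f) (hx : x ∈ (boxSlice v σ).extremePoints ℝ)
    {a b : Fin n} (ha : Underfull v f x a) (hb : Overfull v f x b)
    (hfrac : fracCoords v x ⊆ {a, b}) :
    ∃ y, AreAdjacent (boxSlice v σ) x y ∧ c ⬝ᵥ x ≤ c ⬝ᵥ y ∧
      walkBound v f y < walkBound v f x := by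
  have hab : a ≠ b := by rintro rfl; linarith [ha.2, hb.2]
  have hsub : mismatch v f (pivot v x a b) ⊆ mismatch v f x :=
    mismatch_subset transfer_eqOn_compl_pair (Or.inr ha.mem_mismatch) (Or.inr hb.mem_mismatch)
  have hnd : ¬NeedsDetour v f (pivot v x a b) := by
    rintro ⟨-, -, p, hp, hpf⟩
    rcases fracCoords_pivot_subset hfrac hp with rfl | rfl
    exacts [ha.1 hpf, hb.1 hpf]
  have hlt : (mismatch v f (pivot v x a b)).ncard < (mismatch v f x).ncard := by
    rcases pivot_apply_left_eq_or_apply_right_eq (x := x) hab with h | h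
    · exact ncard_mismatch_lt hsub ha.mem_mismatch (h.trans (ha.eq hf hx.1).symm)
    · exact ncard_mismatch_lt hsub hb.mem_mismatch (h.trans (hb.eq hf hx.1).symm)
  refine ⟨pivot v x a b, areAdjacent_pivot hx hab (ha.2.trans_le (hf.1 a).2)
    ((hf.1 b).1.trans_lt hb.2) hfrac, dotProduct_le_dotProduct_pivot hx.1
    (le_of_isMaxOn_dotProduct hf hopt (hb.2.trans_le (hx.1.1 b).2)
      ((hx.1.1 a).1.trans_lt ha.2)), ?_⟩
  rw [walkBound_eq_of_not_needsDetour hnd]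
  exact hlt.trans_le ncard_mismatch_le_walkBound

theorem exists_overfull_of_forall_ne_le {f : Fin n → ℝ} (hf : f ∈ boxSlice v σ)
    (hfv : (fracCoords v f).Subsingleton) (hx : x ∈ (boxSlice v σ).extremePoints ℝ)
    (hxf : x ≠ f) {p : Fin n} (hp : x p < f p) (hpf : p ∈ fracCoords v f)
    (hge : ∀ j ≠ p, f j ≤ x j) : ∃ b, Overfull v f x b ∧ fracCoords v x ⊆ {p, b} := by
  have hxv := (mem_extremePoints_boxSlice_iff.1 hx).2
  by_cases hr : ∃ r ∈ fracCoords v x, r ≠ p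
  · obtain ⟨r, hr, hrp⟩ := hr
    have hrf : r ∉ fracCoords v f := fun h => hrp (hfv h hpf)
    refine ⟨r, ⟨hrf, (hge r hrp).lt_of_ne fun h => hrf (show f r ∈ Ioo 0 (v r) from h ▸ hr)⟩,
      fun j hj => Or.inr (hxv hj hr)⟩
  · push Not at hr
    obtain ⟨b, hb⟩ := exists_lt_of_ne hf hx.1 (Ne.symm hxf)
    have hbp : b ≠ p := by rintro rfl; linarith
    exact ⟨b, ⟨fun h => hbp (hfv h hpf), hb⟩, fun j hj => Or.inl (hr j hj)⟩

/-- If no bounded coordinate of `f` is underfull, only the fractional coordinate `p` of `f` is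
short, and it can absorb the whole of any overfull coordinate. -/
theorem exists_step_of_forall_not_underfull (hf : f ∈ (boxSlice v σ).extremePoints ℝ)
    (hopt : IsMaxOn (c ⬝ᵥ ·) (boxSlice v σ) f) (hx : x ∈ (boxSlice v σ).extremePoints ℝ)
    (hxf : x ≠ f) (hU : ∀ a, ¬Underfull v f x a) :
    ∃ y, AreAdjacent (boxSlice v σ) x y ∧ c ⬝ᵥ x ≤ c ⬝ᵥ y ∧
      walkBound v f y < walkBound v f x := by
  rw [mem_extremePoints_boxSlice_iff] at hf
  obtain ⟨p, hp⟩ := exists_lt_of_ne hx.1 hf.1 hxf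
  have hpf : p ∈ fracCoords v f := by_contra fun h => hU p ⟨h, hp⟩
  have hge : ∀ j ≠ p, f j ≤ x j :=
    fun j hj => not_lt.1 fun h => hU j ⟨fun hjf => hj (hf.2 hjf hpf), h⟩
  obtain ⟨b, hb, hfrac⟩ := exists_overfull_of_forall_ne_le hf.1 hf.2 hx hxf hp hpf hge
  have hbp : b ≠ p := fun h => hb.1 (h ▸ hpf)
  have hfb := hb.eq hf.1 hx.1
  have hmass := sub_le_sub_of_forall_ne_le hx.1 hf.1 hge hbp
  have hyb : pivot v x p b b = f b := by
    rw [pivot, transfer_apply_right hbp.symm, min_eq_right (by linarith [hpf.2]), hfb, sub_self]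
  have hsub : mismatch v f (pivot v x p b) ⊆ mismatch v f x :=
    mismatch_subset transfer_eqOn_compl_pair (Or.inl hpf) (Or.inr hb.mem_mismatch)
  have hnd : ¬NeedsDetour v f (pivot v x p b) := by
    rintro ⟨⟨a, haf, ha⟩, -⟩
    have hap : a ≠ p := fun h => haf (h ▸ hpf)
    by_cases hab : a = b
    · subst hab; exact ha.ne hyb
    · rw [pivot, transfer_apply_of_ne hap hab] at ha
      exact hU a ⟨haf, ha⟩
  refine ⟨pivot v x p b, areAdjacent_pivot hx hbp.symm (hp.trans hpf.2)
    ((hf.1.1 b).1.trans_lt hb.2) hfrac, dotProduct_le_dotProduct_pivot hx.1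
    (le_of_isMaxOn_dotProduct hf.1 hopt (hb.2.trans_le (hx.1.1 b).2) hpf.1), ?_⟩
  rw [walkBound_eq_of_not_needsDetour hnd]
  exact (ncard_mismatch_lt hsub hb.mem_mismatch hyb).trans_le ncard_mismatch_le_walkBound

theorem exists_step_of_needsDetour (hf : f ∈ boxSlice v σ)
    (hopt : IsMaxOn (c ⬝ᵥ ·) (boxSlice v σ) f) (hx : x ∈ (boxSlice v σ).extremePoints ℝ)
    {p b : Fin n} (hp : p ∈ fracCoords v x) (hpf : p ∈ fracCoords v f)
    (hb : Overfull v f x b) (hd : NeedsDetour v f x) :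
    ∃ y, AreAdjacent (boxSlice v σ) x y ∧ c ⬝ᵥ x ≤ c ⬝ᵥ y ∧
      walkBound v f y < walkBound v f x := by
  rw [mem_extremePoints_boxSlice_iff] at hx
  have hbp : b ≠ p := fun h => hb.1 (h ▸ hpf)
  have hfrac : fracCoords v x ⊆ {p, b} := fun j hj => Or.inl (hx.2 hj hp)
  have hsub : mismatch v f (pivot v x p b) ⊆ mismatch v f x :=
    mismatch_subset transfer_eqOn_compl_pair (Or.inl hpf) (Or.inr hb.mem_mismatch)
  have hwx : walkBound v f x = (mismatch v f x).ncard + 1 := by simp [walkBound, hd]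
  refine ⟨pivot v x p b, areAdjacent_pivot (mem_extremePoints_boxSlice_iff.2 hx) hbp.symm hp.2
    ((hf.1 b).1.trans_lt hb.2) hfrac, dotProduct_le_dotProduct_pivot hx.1
    (le_of_isMaxOn_dotProduct hf hopt (hb.2.trans_le (hx.1.1 b).2) hpf.1), ?_⟩
  rcases pivot_apply_left_eq_or_apply_right_eq (x := x) hbp.symm with h | h
  · have hnd : ¬NeedsDetour v f (pivot v x p b) := by
      rintro ⟨-, -, q, hq, hqf⟩
      rcases fracCoords_pivot_subset hfrac hq with rfl | rfl
      · exact hq.2.ne h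
      · exact hb.1 hqf
    rw [walkBound_eq_of_not_needsDetour hnd, hwx]
    exact Nat.lt_succ_of_le (ncard_le_ncard hsub)
  · have := ncard_mismatch_lt hsub hb.mem_mismatch (h.trans (hb.eq hf hx.1).symm)
    rw [hwx]
    exact walkBound_le_ncard_mismatch_add_one.trans_lt (by omega)

theorem exists_step_of_forall_not_overfull (hf : f ∈ (boxSlice v σ).extremePoints ℝ)
    (hopt : IsMaxOn (c ⬝ᵥ ·) (boxSlice v σ) f) (hx : x ∈ (boxSlice v σ).extremePoints ℝ)
    (hxf : x ≠ f) (hO : ∀ b, ¬Overfull v f x b) :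
    ∃ y, AreAdjacent (boxSlice v σ) x y ∧ c ⬝ᵥ x ≤ c ⬝ᵥ y ∧
      walkBound v f y < walkBound v f x := by
  have hQ : ∀ τ, reflect v '' boxSlice v τ = boxSlice v (∑ j, v j - τ) :=
    fun _ => image_reflect_boxSlice
  have hinj : Function.Injective (reflect v) := reflect_injective
  have hf' := (AffineMap.mem_extremePoints_image_iff _ hinj).2 hf
  have hx' := (AffineMap.mem_extremePoints_image_iff _ hinj).2 hx
  rw [hQ] at hf' hx'
  have hopt' : IsMaxOn ((-c) ⬝ᵥ ·) (boxSlice v (∑ j, v j - σ)) (reflect v f) := by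
    rw [← hQ]
    rintro _ ⟨y, hy, rfl⟩
    have : c ⬝ᵥ y ≤ c ⬝ᵥ f := hopt hy
    simp only [mem_ofPred_eq, reflect_apply, neg_dotProduct, dotProduct_sub]
    linarith
  obtain ⟨y, hxy, hc, hμ⟩ := exists_step_of_forall_not_underfull hf' hopt' hx'
    (hinj.ne hxf) fun a ha => hO a (underfull_sub.1 ha)
  refine ⟨reflect v y, ?_, ?_, ?_⟩
  · have := AffineMap.areAdjacent_image _ hinj hxy
    rwa [hQ, sub_sub_cancel, reflect_apply, reflect_apply, sub_sub_cancel] at this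
  · simp only [reflect_apply, neg_dotProduct, dotProduct_sub] at hc ⊢
    linarith
  · rw [← walkBound_sub, ← walkBound_sub (x := x), reflect_apply, sub_sub_cancel]
    exact hμ

theorem exists_improving_step (hf : f ∈ (boxSlice v σ).extremePoints ℝ)
    (hopt : IsMaxOn (c ⬝ᵥ ·) (boxSlice v σ) f) (hx : x ∈ (boxSlice v σ).extremePoints ℝ)
    (hxf : x ≠ f) :
    ∃ y, AreAdjacent (boxSlice v σ) x y ∧ c ⬝ᵥ x ≤ c ⬝ᵥ y ∧
      walkBound v f y < walkBound v f x := by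
  by_cases hU : ∀ a, ¬Underfull v f x a
  · exact exists_step_of_forall_not_underfull hf hopt hx hxf hU
  by_cases hO : ∀ b, ¬Overfull v f x b
  · exact exists_step_of_forall_not_overfull hf hopt hx hxf hO
  push Not at hU hO
  obtain ⟨⟨a, ha⟩, ⟨b, hb⟩⟩ := And.intro hU hO
  by_cases hA : ∃ a b, Underfull v f x a ∧ Overfull v f x b ∧ fracCoords v x ⊆ {a, b}
  · obtain ⟨a, b, ha, hb, hfrac⟩ := hA
    exact exists_step_of_underfull_of_overfull hf.1 hopt hx ha hb hfrac
  push Not at hA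
  obtain ⟨r, hr, -⟩ := not_subset.1 (hA a b ha hb)
  have hsingle : fracCoords v x ⊆ {r} :=
    fun j hj => (mem_extremePoints_boxSlice_iff.1 hx).2 hj hr
  have hrf : r ∈ fracCoords v f := by
    by_contra hrf
    rcases lt_trichotomy (x r) (f r) with h | h | h
    · exact hA r b ⟨hrf, h⟩ hb (hsingle.trans (by simp))
    · exact hrf (show f r ∈ Ioo 0 (v r) from h ▸ hr)
    · exact hA a r ha ⟨hrf, h⟩ (hsingle.trans (by simp))
  exact exists_step_of_needsDetour hf.1 hopt hx hr hrf hb ⟨⟨a, ha⟩, ⟨b, hb⟩, r, hr, hrf⟩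

theorem exists_monotoneWalk_boxSlice (hf : f ∈ (boxSlice v σ).extremePoints ℝ)
    (hopt : IsMaxOn (c ⬝ᵥ ·) (boxSlice v σ) f) (hx : x ∈ (boxSlice v σ).extremePoints ℝ) :
    ∃ k ≤ n, ∃ w : ℕ → Fin n → ℝ, w 0 = x ∧ w k = f ∧
      IsMonotoneWalk (boxSlice v σ) (c ⬝ᵥ ·) w k := by
  obtain ⟨k, hk, h⟩ := exists_monotoneWalk_of_descent (walkBound v f)
    (fun _ hy hyf => exists_improving_step hf hopt hy hyf) hx
  exact ⟨k, hk.trans walkBound_le, h⟩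

end steps

end BoxSlice

section Transportation

variable {n : ℕ}

def rowEmbedding (v : Fin n → ℝ) : (Fin n → ℝ) →ᵃ[ℝ] Matrix (Fin 2) (Fin n) ℝ where
  toFun d := Matrix.of ![d, v - d]
  linear :=
    { toFun := fun d => Matrix.of ![d, -d]
      map_add' := fun d e => by ext i j; fin_cases i <;> simp [add_comm]
      map_smul' := fun r d => by ext i j; fin_cases i <;> simp }
  map_vadd' d e := by ext i j; fin_cases i <;> simp; ring

@[simp]
theorem rowEmbedding_apply_zero (v d : Fin n → ℝ) (j : Fin n) : rowEmbedding v d 0 j = d j :=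
  rfl

@[simp]
theorem rowEmbedding_apply_one (v d : Fin n → ℝ) (j : Fin n) :
    rowEmbedding v d 1 j = v j - d j :=
  rfl

theorem rowEmbedding_injective (v : Fin n → ℝ) : Function.Injective (rowEmbedding v) :=
  fun d e h => funext fun j => by simpa using congrFun (congrFun h 0) j

theorem sum_mul_rowEmbedding (s : Matrix (Fin 2) (Fin n) ℝ) (v d : Fin n → ℝ) :
    ∑ i, ∑ j, s i j * rowEmbedding v d i j = (s 0 - s 1) ⬝ᵥ d + s 1 ⬝ᵥ v := by
  simp only [Fin.sum_univ_two, rowEmbedding_apply_zero, rowEmbedding_apply_one, dotProduct,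
    Pi.sub_apply, ← Finset.sum_add_distrib]
  exact Finset.sum_congr rfl fun j _ => by ring

theorem TP_eq_image_rowEmbedding {u : Fin 2 → ℝ} {v : Fin n → ℝ}
    (huv : ∑ i, u i = ∑ j, v j) : TP 2 n u v = rowEmbedding v '' boxSlice v (u 0) := by
  rw [Fin.sum_univ_two] at huv
  ext y
  constructor
  · rintro ⟨hpos, hrow, hcol⟩
    have hy1 : ∀ j, y 1 j = v j - y 0 j := fun j => by
      have := hcol j; rw [Fin.sum_univ_two] at this; linarith
    refine ⟨y 0, ⟨fun j => ⟨hpos 0 j, by linarith [hpos 1 j, hy1 j]⟩, hrow 0⟩, ?_⟩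
    ext i j; fin_cases i <;> simp [hy1]
  · rintro ⟨d, hd, rfl⟩
    refine ⟨fun i j => ?_, fun i => ?_, fun j => by simp [Fin.sum_univ_two]⟩ <;> fin_cases i
    · exact (hd.1 j).1
    · simpa using (hd.1 j).2
    · simpa using hd.2
    · simp [Finset.sum_sub_distrib, hd.2]; linarith

end Transportation

theorem stmt_15_general (n : ℕ) (u : Fin 2 → ℝ) (v : Fin n → ℝ)
    (huv : ∑ i, u i = ∑ j, v j)
    (s : Matrix (Fin 2) (Fin n) ℝ)
    (O : Matrix (Fin 2) (Fin n) ℝ)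
    (hO : O ∈ Set.extremePoints ℝ (TP 2 n u v)) :
    ∃ F : Matrix (Fin 2) (Fin n) ℝ,
      F ∈ Set.extremePoints ℝ (TP 2 n u v) ∧
      (∀ y ∈ TP 2 n u v, ∑ i, ∑ j, s i j * y i j ≤ ∑ i, ∑ j, s i j * F i j) ∧
      ∃ k ≤ n, ∃ w : ℕ → Matrix (Fin 2) (Fin n) ℝ,
        w 0 = O ∧ w k = F ∧
        (∀ l < k, AdjVert 2 n u v (w l) (w (l + 1))) ∧
        (∀ l < k, ∑ i, ∑ j, s i j * w l i j ≤ ∑ i, ∑ j, s i j * w (l + 1) i j) := by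
  have hTP := TP_eq_image_rowEmbedding huv
  have hφ := rowEmbedding_injective v
  rw [hTP] at hO
  obtain ⟨x, -, rfl⟩ := hO.1
  rw [AffineMap.mem_extremePoints_image_iff _ hφ] at hO
  obtain ⟨f, hf, hopt⟩ := BoxSlice.isCompact_boxSlice.exists_mem_extremePoints_isMaxOn ⟨x, hO.1⟩
    (∑ j, (s 0 - s 1) j • ContinuousLinearMap.proj j)
  obtain ⟨k, hk, w, hw0, hwk, hw⟩ := BoxSlice.exists_monotoneWalk_boxSlice hf
    (c := s 0 - s 1) (fun y hy => by simpa [dotProduct] using hopt hy) hO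
  have hwalk := AffineMap.isMonotoneWalk_image _ hφ
    (g' := fun y => ∑ i, ∑ j, s i j * y i j)
    (fun a b h => by simpa only [sum_mul_rowEmbedding] using add_le_add_left h _) hw
  rw [← hTP] at hwalk
  refine ⟨rowEmbedding v f, hTP ▸ (AffineMap.mem_extremePoints_image_iff _ hφ).2 hf, ?_, k, hk,
    rowEmbedding v ∘ w, by simp [hw0], by simp [hwk], fun l hl => (hwalk l hl).1,
    fun l hl => (hwalk l hl).2⟩
  rw [hTP]
  rintro _ ⟨y, hy, rfl⟩
  simp only [sum_mul_rowEmbedding]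
  have : (s 0 - s 1) ⬝ᵥ y ≤ (s 0 - s 1) ⬝ᵥ f := by simpa [dotProduct] using hopt hy
  linarith

/-- monotone Hirsch for 2×n transportation polytopes with bound n: from any
vertex O there is a monotone edge walk of length at most n to some vertex F maximizing
the linear functional given by s. -/
theorem stmt_15 (n : ℕ) (hn : 0 < n) (u : Fin 2 → ℝ) (v : Fin n → ℝ)
    (hu : ∀ i, 0 < u i) (hv : ∀ j, 0 < v j) (huv : ∑ i, u i = ∑ j, v j)
    (s : Matrix (Fin 2) (Fin n) ℝ)
    (O : Matrix (Fin 2) (Fin n) ℝ)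
    (hO : O ∈ Set.extremePoints ℝ (TP 2 n u v)) :
    ∃ F : Matrix (Fin 2) (Fin n) ℝ,
      F ∈ Set.extremePoints ℝ (TP 2 n u v) ∧
      (∀ y ∈ TP 2 n u v, ∑ i, ∑ j, s i j * y i j ≤ ∑ i, ∑ j, s i j * F i j) ∧
      ∃ k ≤ n, ∃ w : ℕ → Matrix (Fin 2) (Fin n) ℝ,
        w 0 = O ∧ w k = F ∧
        (∀ l < k, AdjVert 2 n u v (w l) (w (l + 1))) ∧
        (∀ l < k, ∑ i, ∑ j, s i j * w l i j ≤ ∑ i, ∑ j, s i j * w (l + 1) i j) :=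
  stmt_15_general n u v huv s O hO
end
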